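/- arXiv:1802.07439 — 12 statements merged into one kernel-verified Lean document; each statement's English description precedes it below -/
import Mathlib

section
/- Let J be a finite set of jobs, where job j has a release date r_j ∈ ℕ, a deadline d_j ∈ ℕ and a processing requirement p_j ∈ ℕ. Suppose that for every pair of naturals s ≤ t we have Σ_{j : s ≤ r_j and d_j ≤ t} p_j ≤ t − s. Then there exists a family (A_j)_{j∈J} of pairwise disjoint finite sets of naturals with |A_j| = p_j and r_j ≤ a < d_j for every a ∈ A_j (i.e., a preemptive single-machine schedule that gives each job j exactly p_j unit time slots between its release date and its deadline). -/
/-!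
Split every job `j` into `p j` unit pieces, each of which may go to any slot of the window
`[r j, d j)`. A schedule is an injective assignment of pieces to admissible slots, so by Hall's
theorem it suffices that every set `T` of jobs has total requirement at most the size of the union
`U` of its windows. Let `[s, t)` be the first maximal run of consecutive slots of `U`: every job of
`T` with a nonempty window starting before `t` lies inside `[s, t)`, so these jobs need at most
`t - s` slots by hypothesis, and the remaining jobs are handled by induction on `T`.
-/

open Finset

theorem exists_Ico_subset_and_notMem (U : Finset ℕ) (s : ℕ) :
    ∃ t, s ≤ t ∧ t ∉ U ∧ Ico s t ⊆ U := by
  classical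
  have hgap : ∃ n, s ≤ n ∧ n ∉ U := by
    simpa using (Set.Ici_infinite s).exists_notMem_finset U
  refine ⟨Nat.find hgap, (Nat.find_spec hgap).1, (Nat.find_spec hgap).2, fun x hx => ?_⟩
  rw [mem_Ico] at hx
  by_contra hxU
  exact absurd (Nat.find_min' hgap ⟨hx.1, hxU⟩) (not_le.2 hx.2)

section Scheduling

variable {J : Type*} [Fintype J] {r d p : J → ℕ}

def LoadBounded (r d p : J → ℕ) : Prop :=
  ∀ s t : ℕ, s ≤ t → (∑ j ∈ univ.filter fun j => s ≤ r j ∧ d j ≤ t, p j) ≤ t - s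

theorem LoadBounded.eq_zero_of_le (h : LoadBounded r d p) {j : J} (hj : d j ≤ r j) : p j = 0 := by
  have hle := (single_le_sum (f := p) (fun _ _ => Nat.zero_le _)
    (mem_filter.2 ⟨mem_univ j, le_rfl, hj⟩)).trans (h (r j) (r j) le_rfl)
  omega

theorem LoadBounded.lt_of_ne_zero (h : LoadBounded r d p) {j : J} (hj : p j ≠ 0) : r j < d j :=
  not_le.1 fun hle => hj (h.eq_zero_of_le hle)

theorem LoadBounded.sum_le_card_biUnion (h : LoadBounded r d p) (T : Finset J) :
    ∑ j ∈ T, p j ≤ (T.biUnion fun j => Ico (r j) (d j)).card := by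
  induction T using Finset.strongInduction with
  | H T ih =>
  set U := T.biUnion fun j => Ico (r j) (d j)
  rcases U.eq_empty_or_nonempty with hU | hU
  · refine (sum_eq_zero fun j hj => h.eq_zero_of_le ?_).trans_le (Nat.zero_le _)
    have hempty : Ico (r j) (d j) = ∅ :=
      subset_empty.1 (hU ▸ subset_biUnion_of_mem (fun j => Ico (r j) (d j)) hj)
    exact not_lt.1 (Ico_eq_empty_iff.1 hempty)
  obtain ⟨s, hsU, hmin⟩ : ∃ s ∈ U, ∀ x ∈ U, s ≤ x :=
    ⟨U.min' hU, U.min'_mem hU, U.min'_le⟩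
  obtain ⟨t, hst, htU, hrun⟩ := exists_Ico_subset_and_notMem U s
  obtain ⟨j₀, hj₀, hsj₀⟩ := mem_biUnion.1 hsU
  have hearly : ∑ j ∈ T.filter (fun j => r j < t), p j ≤ t - s := by
    refine (sum_le_sum_of_ne_zero fun j hj hp => ?_).trans (h s t hst)
    obtain ⟨hjT, hjt⟩ := mem_filter.1 hj
    have hrd := h.lt_of_ne_zero hp
    have hsr : s ≤ r j := hmin _ (mem_biUnion.2 ⟨j, hjT, left_mem_Ico.2 hrd⟩)
    -- otherwise the window of `j` would contain the gap `t`
    have hdt : d j ≤ t := not_lt.1 fun htd =>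
      htU (mem_biUnion.2 ⟨j, hjT, mem_Ico.2 ⟨hjt.le, htd⟩⟩)
    exact mem_filter.2 ⟨mem_univ j, hsr, hdt⟩
  set T' := T.filter (fun j => ¬ r j < t)
  have hlate : ∑ j ∈ T', p j ≤ (T'.biUnion fun j => Ico (r j) (d j)).card := by
    refine ih T' (filter_ssubset.2 ⟨j₀, hj₀, ?_⟩)
    have hst' : s < t := hst.lt_of_ne (ne_of_mem_of_not_mem hsU htU)
    have := mem_Ico.1 hsj₀
    omega
  have hcard : (t - s) + (T'.biUnion fun j => Ico (r j) (d j)).card ≤ U.card := by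
    have hdisj : Disjoint (Ico s t) (T'.biUnion fun j => Ico (r j) (d j)) := by
      simp only [disjoint_left, mem_biUnion, mem_Ico, not_exists, not_and]
      intro x hx j hj hxj
      have := (mem_filter.1 hj).2
      omega
    rw [← Nat.card_Ico, ← card_union_of_disjoint hdisj]
    exact card_le_card <|
      union_subset hrun (biUnion_subset_biUnion_of_subset_left _ (filter_subset _ _))
  rw [← sum_filter_add_sum_filter_not T (fun j => r j < t)]
  exact (add_le_add hearly hlate).trans hcard

theorem LoadBounded.card_le_card_biUnion (h : LoadBounded r d p) (S : Finset (Σ j, Fin (p j))) :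
    S.card ≤ (S.biUnion fun x => Ico (r x.1) (d x.1)).card := by
  classical
  calc S.card ≤ ((S.image Sigma.fst).sigma fun j => univ).card :=
        card_le_card fun x hx => mem_sigma.2 ⟨mem_image_of_mem _ hx, mem_univ _⟩
    _ = ∑ j ∈ S.image Sigma.fst, p j := by simp [card_sigma]
    _ ≤ ((S.image Sigma.fst).biUnion fun j => Ico (r j) (d j)).card := h.sum_le_card_biUnion _
    _ = (S.biUnion fun x => Ico (r x.1) (d x.1)).card := by rw [image_biUnion]

end Scheduling

/-- if for every pair of naturals `s ≤ t` the total processing requirement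
of jobs released at or after `s` with deadline at most `t` is at most `t − s`, then there
is a preemptive single-machine schedule giving each job `j` exactly `p j` unit slots in
`[r j, d j)` (slots pairwise disjoint across jobs). -/
theorem stmt1 {J : Type} [Fintype J] (r d p : J → ℕ)
    (h : ∀ s t : ℕ, s ≤ t →
      (∑ j ∈ Finset.univ.filter fun j => s ≤ r j ∧ d j ≤ t, p j) ≤ t - s) :
    ∃ A : J → Finset ℕ,
      (∀ j j', j ≠ j' → Disjoint (A j) (A j')) ∧
      (∀ j, (A j).card = p j) ∧
      (∀ j, ∀ a ∈ A j, r j ≤ a ∧ a < d j) := by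
  obtain ⟨f, hf, hslot⟩ := (all_card_le_biUnion_card_iff_exists_injective
    fun x : Σ j, Fin (p j) => Ico (r x.1) (d x.1)).1 (LoadBounded.card_le_card_biUnion h)
  refine ⟨fun j => univ.map ⟨fun k => f ⟨j, k⟩, hf.comp sigma_mk_injective⟩, ?_, ?_, ?_⟩
  · intro j j' hjj'
    simp only [disjoint_left, mem_map, mem_univ, true_and, Function.Embedding.coeFn_mk]
    rintro _ ⟨k, rfl⟩ ⟨k', hk'⟩
    exact hjj' (congrArg Sigma.fst (hf hk')).symm
  · simp
  · intro j a ha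
    obtain ⟨k, -, rfl⟩ := mem_map.1 ha
    exact mem_Ico.1 (hslot _)
end

section
/- Let x be a feasible solution to (IP1). For each job j define d_j = 1 + max{t : x_{j,t} = 1} (feasibility of (IP1) forces x_{j,r_j} = 1, so d_j is well defined). Then there exists a schedule, i.e., pairwise disjoint sets A_j ⊆ {0,1,…,T−1} with |A_j| = p_j, such that every a ∈ A_j satisfies r_j ≤ a < d_j. Consequently the total weighted flow-time of this schedule, Σ_j w_j·(1 + max A_j − r_j), is at most the cost Σ_j Σ_{t=r_j}^{T} w_j·x_{j,t} of x. -/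
/-!
With the deadlines `d j`, it suffices to give job `j` exactly `p j` unit slots in its window
`[r j, min (d j) T)`, because its flow time is then at most `d j - r j`, the number of
`t ∈ [r j, T]` with `x j t = 1`. Jobs released in `[s, t]` whose window ends by `t` have
`x j t = 0`, so the covering constraint of (IP1) on `[s, t]` bounds their total size by `t - s`
(for `t ≥ T` the busy condition gives the same bound). For windows on a line this implies Hall's
condition: cut the union of the windows at its first gap and induct on the remaining jobs.
Hall's theorem applied to `p j` copies of each job `j` then yields the schedule.
-/

/-- (IP1) feasibility for the weighted flow-time integer program. -/
def IP1Feasible {J : Type} [Fintype J] (p r : J → ℕ) (T : ℕ) (x : J → ℕ → ℕ) : Prop :=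
  (∀ j t, r j ≤ t → t ≤ T → x j t ≤ 1) ∧
  (∀ j t, r j < t → t ≤ T → x j t ≤ x j (t - 1)) ∧
  (∀ s t : ℕ, s ≤ t → t ≤ T →
    (∑ j ∈ Finset.univ.filter fun j => s ≤ r j ∧ r j ≤ t, (p j : ℤ)) - ((t : ℤ) - (s : ℤ))
      ≤ ∑ j ∈ Finset.univ.filter fun j => s ≤ r j ∧ r j ≤ t, (p j : ℤ) * (x j t : ℤ))

/-- Cost of an (IP1) solution: `∑_j ∑_{t = r_j}^{T} w_j · x_{j,t}`. -/
def IP1Cost {J : Type} [Fintype J] (w : J → ℚ) (r : J → ℕ) (T : ℕ) (x : J → ℕ → ℕ) : ℚ :=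
  ∑ j, ∑ t ∈ Finset.Icc (r j) T, w j * (x j t : ℚ)

open Finset Function

theorem Finset.exists_lt_Ico_subset_notMem {U : Finset ℕ} {s : ℕ} (hs : s ∈ U) :
    ∃ t, s < t ∧ Ico s t ⊆ U ∧ t ∉ U := by
  have hgap : ∃ n, s + n ∉ U := by
    obtain ⟨n, hn⟩ := U.exists_nat_subset_range
    exact ⟨n, fun h => by simpa using hn h⟩
  refine ⟨s + Nat.find hgap, ?_, fun u hu => ?_, Nat.find_spec hgap⟩
  · have : Nat.find hgap ≠ 0 := fun h0 => by simpa [h0, hs] using Nat.find_spec hgap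
    omega
  · obtain ⟨hsu, hut⟩ := mem_Ico.1 hu
    simpa [Nat.add_sub_cancel' hsu] using Nat.find_min hgap (m := u - s) (by omega)

theorem Finset.sum_le_card_biUnion_Ico {J : Type*} (p a b : J → ℕ) (K : Finset J)
    (hab : ∀ j ∈ K, a j < b j)
    (H : ∀ s t, s ≤ t → ∑ j ∈ K with s ≤ a j ∧ b j ≤ t, p j ≤ t - s) :
    ∑ j ∈ K, p j ≤ #(K.biUnion fun j => Ico (a j) (b j)) := by
  classical
  induction K using Finset.strongInduction with
  | H K ih =>
  rcases K.eq_empty_or_nonempty with rfl | hK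
  · simp
  obtain ⟨j₀, hj₀, hmin⟩ := K.exists_min_image a hK
  set U := K.biUnion fun j => Ico (a j) (b j)
  obtain ⟨t, hst, hIco, ht⟩ := exists_lt_Ico_subset_notMem (s := a j₀) (U := U)
    (mem_biUnion.2 ⟨j₀, hj₀, left_mem_Ico.2 (hab j₀ hj₀)⟩)
  set K₂ := K.filter (t ≤ a ·)
  -- a job starting before the gap `t` cannot cover it, so it ends by `t`
  have hK₁ : ∑ j ∈ K with ¬ t ≤ a j, p j ≤ t - a j₀ := by
    refine (sum_le_sum_of_subset fun j hj => ?_).trans (H _ _ hst.le)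
    obtain ⟨hjK, hjt⟩ := mem_filter.1 hj
    have : t ∉ Ico (a j) (b j) := fun h => ht (mem_biUnion.2 ⟨j, hjK, h⟩)
    simp only [mem_Ico, not_and, not_lt] at this
    exact mem_filter.2 ⟨hjK, hmin j hjK, this (by omega)⟩
  have hK₂ : ∑ j ∈ K₂, p j ≤ #(K₂.biUnion fun j => Ico (a j) (b j)) :=
    ih K₂ (filter_ssubset.2 ⟨j₀, hj₀, by omega⟩) (fun j hj => hab j (mem_filter.1 hj).1)
      fun s t' hst' => (sum_le_sum_of_subset (filter_subset_filter _ (filter_subset _ K))).trans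
        (H s t' hst')
  have hdisj : Disjoint (Ico (a j₀) t) (K₂.biUnion fun j => Ico (a j) (b j)) := by
    refine disjoint_left.2 fun u hu hu₂ => ?_
    obtain ⟨j, hj, hju⟩ := mem_biUnion.1 hu₂
    have := (mem_filter.1 hj).2
    simp only [mem_Ico] at hu hju
    omega
  have hsub : Ico (a j₀) t ∪ K₂.biUnion (fun j => Ico (a j) (b j)) ⊆ U :=
    union_subset hIco (biUnion_subset_biUnion_of_subset_left _ (filter_subset _ K))
  calc ∑ j ∈ K, p j = ∑ j ∈ K₂, p j + ∑ j ∈ K with ¬ t ≤ a j, p j :=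
        (sum_filter_add_sum_filter_not K _ p).symm
    _ ≤ #(K₂.biUnion fun j => Ico (a j) (b j)) + #(Ico (a j₀) t) := by
        rw [Nat.card_Ico]; omega
    _ = #(Ico (a j₀) t ∪ K₂.biUnion fun j => Ico (a j) (b j)) := by
        rw [card_union_of_disjoint hdisj, add_comm]
    _ ≤ #U := card_le_card hsub

theorem Finset.exists_pairwise_disjoint_subset_card_eq {J β : Type*} [DecidableEq β]
    (S : J → Finset β) (p : J → ℕ) (hS : ∀ K : Finset J, ∑ j ∈ K, p j ≤ #(K.biUnion S)) :
    ∃ A : J → Finset β, (∀ j, A j ⊆ S j) ∧ (∀ j, #(A j) = p j) ∧ Pairwise (Disjoint on A) := by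
  classical
  -- Hall's theorem applied to `p j` copies of each `j`
  obtain ⟨f, hf, hfS⟩ := (all_card_le_biUnion_card_iff_exists_injective
    fun i : (j : J) × Fin (p j) => S i.1).1 fun C => calc
      #C ≤ #((C.image Sigma.fst).sigma fun _ => univ) :=
        card_le_card fun i hi => mem_sigma.2 ⟨mem_image_of_mem _ hi, mem_univ _⟩
      _ = ∑ j ∈ C.image Sigma.fst, p j := by simp
      _ ≤ #((C.image Sigma.fst).biUnion S) := hS _
      _ = #(C.biUnion fun i => S i.1) := by rw [image_biUnion]
  refine ⟨fun j => univ.map ⟨fun k => f ⟨j, k⟩, hf.comp sigma_mk_injective⟩,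
    fun j _ ha => ?_, fun j => by simp, fun j j' hjj' => disjoint_left.2 fun a ha ha' => ?_⟩
  · obtain ⟨k, -, rfl⟩ := mem_map.1 ha
    exact hfS _
  · obtain ⟨k, -, rfl⟩ := mem_map.1 ha
    obtain ⟨k', -, hk'⟩ := mem_map.1 ha'
    exact hjj' (congrArg Sigma.fst (hf hk')).symm

theorem sum_release_ge_le_sub {J : Type} [Fintype J] (p r : J → ℕ) (T : ℕ)
    (hT : T = ∑ j, p j) (hrT : ∀ j, r j < T)
    (hbusy : ∀ t, 1 ≤ t → t ≤ T → t ≤ ∑ j with r j < t, p j) (s : ℕ) :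
    ∑ j with s ≤ r j, p j ≤ T - s := by
  have hsplit := sum_filter_add_sum_filter_not univ (fun j => r j < s) p
  simp only [not_lt] at hsplit
  rcases Nat.eq_zero_or_pos s with rfl | hs
  · omega
  rcases le_or_gt s T with hsT | hTs
  · have := hbusy s hs hsT
    omega
  · rw [sum_eq_zero fun j hj => absurd (mem_filter.1 hj).2 (by have := hrT j; omega)]
    exact Nat.zero_le _

namespace IP1Feasible

variable {J : Type} [Fintype J] {p r : J → ℕ} {T : ℕ} {x : J → ℕ → ℕ}

theorem x_le_x_of_le (hx : IP1Feasible p r T x) {j : J} {u v : ℕ} (hru : r j ≤ u) (huv : u ≤ v)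
    (hvT : v ≤ T) : x j v ≤ x j u := by
  induction v, huv using Nat.le_induction with
  | base => exact le_rfl
  | succ v _ ih =>
    have hstep : x j (v + 1) ≤ x j v := by simpa using hx.2.1 j (v + 1) (by omega) hvT
    exact hstep.trans (ih (by omega))

theorem sum_le_of_forall_eq_zero (hx : IP1Feasible p r T x) {s t : ℕ} (hst : s ≤ t)
    (htT : t ≤ T) {G : Finset J} (hG : ∀ j ∈ G, s ≤ r j ∧ r j ≤ t ∧ x j t = 0) :
    ∑ j ∈ G, p j ≤ t - s := by
  set F := univ.filter fun j => s ≤ r j ∧ r j ≤ t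
  have hGF : G ⊆ F := fun j hj => mem_filter.2 ⟨mem_univ j, (hG j hj).1, (hG j hj).2.1⟩
  have hcover := hx.2.2 s t hst htT
  zify [hst]
  calc ∑ j ∈ G, (p j : ℤ) = ∑ j ∈ G, (p j : ℤ) * (1 - x j t) :=
        sum_congr rfl fun j hj => by simp [(hG j hj).2.2]
    _ ≤ ∑ j ∈ F, (p j : ℤ) * (1 - x j t) := by
        refine sum_le_sum_of_subset_of_nonneg hGF fun j hj _ => mul_nonneg (by positivity) ?_
        have := hx.1 j t (mem_filter.1 hj).2.2 htT
        omega
    _ = ∑ j ∈ F, (p j : ℤ) - ∑ j ∈ F, (p j : ℤ) * x j t := by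
        simp only [mul_sub, mul_one, sum_sub_distrib]
    _ ≤ t - s := by linarith

theorem sum_window_le (hx : IP1Feasible p r T x) (hT : T = ∑ j, p j) (hrT : ∀ j, r j < T)
    (hbusy : ∀ t, 1 ≤ t → t ≤ T → t ≤ ∑ j with r j < t, p j) {d : J → ℕ}
    (hd : ∀ j t, r j ≤ t → t ≤ T → x j t = 1 → t < d j) (hrd : ∀ j, r j < d j)
    {s t : ℕ} (hst : s ≤ t) : ∑ j with s ≤ r j ∧ min (d j) T ≤ t, p j ≤ t - s := by
  rcases lt_or_ge t T with htT | hTt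
  · refine hx.sum_le_of_forall_eq_zero hst htT.le fun j hj => ?_
    obtain ⟨hsr, hdt⟩ := (mem_filter.1 hj).2
    have hdt : d j ≤ t := by omega
    have hrt : r j ≤ t := (hrd j).le.trans hdt
    have := hx.1 j t hrt htT.le
    have := mt (hd j t hrt htT.le) (by omega)
    exact ⟨hsr, hrt, by omega⟩
  · calc ∑ j with s ≤ r j ∧ min (d j) T ≤ t, p j ≤ ∑ j with s ≤ r j, p j :=
          sum_le_sum_of_subset (monotone_filter_right _ fun _ _ => And.left)
      _ ≤ T - s := sum_release_ge_le_sub p r T hT hrT hbusy s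
      _ ≤ t - s := by omega

theorem sub_release_le_sum (hx : IP1Feasible p r T x) {j : J} {d : ℕ}
    (hd : r j ≤ d - 1 ∧ d - 1 ≤ T ∧ x j (d - 1) = 1) : d - r j ≤ ∑ t ∈ Icc (r j) T, x j t :=
  calc d - r j = ∑ t ∈ Ico (r j) d, 1 := by simp
    _ ≤ ∑ t ∈ Ico (r j) d, x j t := sum_le_sum fun t ht => by
        obtain ⟨hrt, htd⟩ := mem_Ico.1 ht
        simpa [hd.2.2] using hx.x_le_x_of_le hrt (by omega : t ≤ d - 1) hd.2.1
    _ ≤ ∑ t ∈ Icc (r j) T, x j t := sum_le_sum_of_subset fun t ht => by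
        simp only [mem_Ico, mem_Icc] at ht ⊢
        omega

end IP1Feasible

theorem stmt2_general {J : Type} [Fintype J] (p r : J → ℕ) (w : J → ℚ)
    (hw : ∀ j, 0 ≤ w j)
    (T : ℕ) (hT : T = ∑ j, p j) (hrT : ∀ j, r j < T)
    (hbusy : ∀ t : ℕ, 1 ≤ t → t ≤ T →
      t ≤ ∑ j ∈ Finset.univ.filter fun j => r j < t, p j)
    (x : J → ℕ → ℕ) (hx : IP1Feasible p r T x)
    (d : J → ℕ)
    (hd2 : ∀ j, r j ≤ d j - 1 ∧ d j - 1 ≤ T ∧ x j (d j - 1) = 1)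
    (hd3 : ∀ j t, r j ≤ t → t ≤ T → x j t = 1 → t < d j) :
    ∃ A : J → Finset ℕ,
      (∀ j j', j ≠ j' → Disjoint (A j) (A j')) ∧
      (∀ j, A j ⊆ Finset.range T) ∧
      (∀ j, (A j).card = p j) ∧
      (∀ j, ∀ a ∈ A j, r j ≤ a ∧ a < d j) ∧
      (∑ j, w j * (((1 + (A j).sup id) - r j : ℕ) : ℚ)) ≤ IP1Cost w r T x := by
  have hrd : ∀ j, r j < d j := fun j =>
    (hd2 j).1.trans_lt (hd3 j _ (hd2 j).1 (hd2 j).2.1 (hd2 j).2.2)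
  obtain ⟨A, hAS, hAcard, hAdisj⟩ := exists_pairwise_disjoint_subset_card_eq
    (fun j => Ico (r j) (min (d j) T)) p fun K =>
      sum_le_card_biUnion_Ico p r (fun j => min (d j) T) K (fun j _ => lt_min (hrd j) (hrT j))
        fun s t hst => (sum_le_sum_of_subset (filter_subset_filter _ (subset_univ K))).trans
          (hx.sum_window_le hT hrT hbusy hd3 hrd hst)
  have hA : ∀ j, ∀ a ∈ A j, r j ≤ a ∧ a < min (d j) T := fun j a ha => mem_Ico.1 (hAS j ha)
  refine ⟨A, fun j j' h => hAdisj h, fun j a ha => mem_range.2 ((hA j a ha).2.trans_le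
    (min_le_right _ _)), hAcard, fun j a ha => ⟨(hA j a ha).1, (hA j a ha).2.trans_le
    (min_le_left _ _)⟩, sum_le_sum fun j _ => ?_⟩
  have hmax : (A j).sup id < d j :=
    (Finset.sup_lt_iff (bot_le.trans_lt (hrd j))).2 fun a ha =>
      (hA j a ha).2.trans_le (min_le_left _ _)
  have hflow : 1 + (A j).sup id - r j ≤ ∑ t ∈ Icc (r j) T, x j t :=
    (by omega : 1 + (A j).sup id - r j ≤ d j - r j).trans (hx.sub_release_le_sum (hd2 j))
  calc w j * ((1 + (A j).sup id - r j : ℕ) : ℚ)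
      ≤ w j * ((∑ t ∈ Icc (r j) T, x j t : ℕ) : ℚ) :=
        mul_le_mul_of_nonneg_left (by exact_mod_cast hflow) (hw j)
    _ = ∑ t ∈ Icc (r j) T, w j * (x j t : ℚ) := by rw [Nat.cast_sum, mul_sum]

/-- from a feasible (IP1) solution `x` with deadlines
`d j = 1 + max { t : x j t = 1 }`, one can extract a preemptive schedule
(pairwise disjoint sets `A j ⊆ {0,…,T−1}` of `p j` slots, each in `[r j, d j)`)
whose total weighted flow-time `∑_j w_j·(1 + max A_j − r_j)` is at most the cost of `x`. -/
theorem stmt2 {J : Type} [Fintype J] [DecidableEq J] (p r : J → ℕ) (w : J → ℚ)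
    (hp : ∀ j, 1 ≤ p j) (hw : ∀ j, 0 ≤ w j)
    (T : ℕ) (hT : T = ∑ j, p j) (hrT : ∀ j, r j < T)
    (hbusy : ∀ t : ℕ, 1 ≤ t → t ≤ T →
      t ≤ ∑ j ∈ Finset.univ.filter fun j => r j < t, p j)
    (x : J → ℕ → ℕ) (hx : IP1Feasible p r T x)
    (d : J → ℕ)
    (hd1 : ∀ j, 1 ≤ d j)
    (hd2 : ∀ j, r j ≤ d j - 1 ∧ d j - 1 ≤ T ∧ x j (d j - 1) = 1)
    (hd3 : ∀ j t, r j ≤ t → t ≤ T → x j t = 1 → t < d j) :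
    ∃ A : J → Finset ℕ,
      (∀ j j', j ≠ j' → Disjoint (A j) (A j')) ∧
      (∀ j, A j ⊆ Finset.range T) ∧
      (∀ j, (A j).card = p j) ∧
      (∀ j, ∀ a ∈ A j, r j ≤ a ∧ a < d j) ∧
      (∑ j, w j * (((1 + (A j).sup id) - r j : ℕ) : ℚ)) ≤ IP1Cost w r T x :=
  stmt2_general p r w hw T hT hrT hbusy x hx d hd2 hd3
end

section
/- Let (A_j) be any schedule and C_j = 1 + max A_j its completion times. Define x_{j,t} = 1 if r_j ≤ t < C_j and x_{j,t} = 0 otherwise (for r_j ≤ t ≤ T). Then x is a feasible solution to (IP1), and its cost Σ_j Σ_{t=r_j}^{T} w_j·x_{j,t} equals the total weighted flow-time Σ_j w_j·(C_j − r_j) of the schedule. -/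
/-!
A job is alive at every time step of `[r_j, C_j)`, so `x` is monotone, and since
`C_j ≤ T + 1` its cost is exactly the flow-time. For the interval constraint of `I = [s, t]`,
a job of `J(I)` that is not alive at `t` has completed by `t`, so it was processed entirely
inside `[s, t)`; as processing sets are disjoint, these jobs have total processing time at
most `t - s`.
-/

open Finset Function

lemma Finset.sum_card_le_card_of_pairwiseDisjoint {ι α : Type*} [DecidableEq α] {S : Finset ι}
    {A : ι → Finset α} {U : Finset α} (hdisj : (S : Set ι).PairwiseDisjoint A)
    (hsub : ∀ j ∈ S, A j ⊆ U) : ∑ j ∈ S, (A j).card ≤ U.card := by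
  rw [← card_biUnion hdisj]
  exact card_le_card (biUnion_subset.mpr hsub)

lemma lt_one_add_sup_id {A : Finset ℕ} {a : ℕ} (ha : a ∈ A) : a < 1 + A.sup id := by
  have := le_sup (f := id) ha
  simp only [id] at this
  omega

lemma one_add_sup_id_le {A : Finset ℕ} {T : ℕ} (hA : A ⊆ range T) : 1 + A.sup id ≤ T + 1 := by
  have : A.sup id ≤ T := Finset.sup_le fun a ha => (mem_range.mp (hA ha)).le
  omega

section AliveIndicator

variable {J : Type}

def aliveIndicator (r C : J → ℕ) (j : J) (t : ℕ) : ℕ := if r j ≤ t ∧ t < C j then 1 else 0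

variable {p r C : J → ℕ} {T : ℕ}

lemma aliveIndicator_le_one (j : J) (t : ℕ) : aliveIndicator r C j t ≤ 1 := by
  unfold aliveIndicator; split <;> simp

lemma aliveIndicator_le_sub_one {j : J} {t : ℕ} (ht : r j < t) :
    aliveIndicator r C j t ≤ aliveIndicator r C j (t - 1) := by
  unfold aliveIndicator
  by_cases h : r j ≤ t ∧ t < C j
  · rw [if_pos h, if_pos ⟨by omega, by omega⟩]
  · simp [h]

lemma sum_mul_aliveIndicator (S : Finset J) (t : ℕ) :
    ∑ j ∈ S, (p j : ℤ) * (aliveIndicator r C j t : ℤ)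
      = ∑ j ∈ S with r j ≤ t ∧ t < C j, (p j : ℤ) := by
  rw [sum_filter]
  refine sum_congr rfl fun j _ => ?_
  unfold aliveIndicator; split <;> simp

lemma sum_released_not_alive_le [Fintype J] {A : J → Finset ℕ}
    (hdisj : Pairwise (Disjoint on A)) (hcard : ∀ j, (A j).card = p j) (hrel : ∀ j, ∀ a ∈ A j, r j ≤ a)
    (hdone : ∀ j, ∀ a ∈ A j, a < C j) {s t : ℕ} :
    ∑ j with (s ≤ r j ∧ r j ≤ t) ∧ ¬(r j ≤ t ∧ t < C j), p j ≤ t - s := by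
  calc ∑ j with (s ≤ r j ∧ r j ≤ t) ∧ ¬(r j ≤ t ∧ t < C j), p j
      = ∑ j with (s ≤ r j ∧ r j ≤ t) ∧ ¬(r j ≤ t ∧ t < C j), (A j).card :=
        sum_congr rfl fun j _ => (hcard j).symm
    _ ≤ (Ico s t).card := by
        refine sum_card_le_card_of_pairwiseDisjoint (hdisj.set_pairwise _) ?_
        intro j hj a ha
        simp only [mem_filter, mem_univ, true_and] at hj
        have := hrel j a ha
        have := hdone j a ha
        exact mem_Ico.mpr ⟨by omega, by omega⟩
    _ = t - s := Nat.card_Ico s t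

theorem ip1Feasible_aliveIndicator [Fintype J] {A : J → Finset ℕ}
    (hdisj : Pairwise (Disjoint on A)) (hcard : ∀ j, (A j).card = p j)
    (hrel : ∀ j, ∀ a ∈ A j, r j ≤ a) (hdone : ∀ j, ∀ a ∈ A j, a < C j) :
    IP1Feasible p r T (aliveIndicator r C) := by
  refine ⟨fun j t _ _ => aliveIndicator_le_one j t,
    fun j t ht _ => aliveIndicator_le_sub_one ht, fun s t _ _ => ?_⟩
  have hsplit := sum_filter_add_sum_filter_not (univ.filter fun j => s ≤ r j ∧ r j ≤ t)
    (fun j => r j ≤ t ∧ t < C j) (fun j => (p j : ℤ))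
  have hcompleted :
      ((∑ j with (s ≤ r j ∧ r j ≤ t) ∧ ¬(r j ≤ t ∧ t < C j), p j : ℕ) : ℤ) ≤ t - s := by
    have := sum_released_not_alive_le (s := s) (t := t) hdisj hcard hrel hdone
    omega
  rw [sum_mul_aliveIndicator]
  simp only [filter_filter, Nat.cast_sum] at hsplit hcompleted ⊢
  linarith

theorem ip1Cost_aliveIndicator [Fintype J] (w : J → ℚ) (hC : ∀ j, C j ≤ T + 1) :
    IP1Cost w r T (aliveIndicator r C) = ∑ j, w j * ((C j - r j : ℕ) : ℚ) := by
  refine sum_congr rfl fun j _ => ?_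
  have halive : {t ∈ Icc (r j) T | r j ≤ t ∧ t < C j} = Ico (r j) (C j) := by
    ext t
    have := hC j
    simp only [mem_filter, mem_Icc, mem_Ico]
    omega
  simp only [aliveIndicator, Nat.cast_ite, Nat.cast_one, Nat.cast_zero, mul_ite, mul_one,
    mul_zero, sum_ite, sum_const_zero, add_zero, sum_const, halive, Nat.card_Ico, nsmul_eq_mul,
    mul_comm]

end AliveIndicator

theorem stmt3_general {J : Type} [Fintype J] (p r : J → ℕ) (w : J → ℚ) (T : ℕ) (A : J → Finset ℕ)
    (hdisj : ∀ j j', j ≠ j' → Disjoint (A j) (A j'))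
    (hrange : ∀ j, A j ⊆ Finset.range T)
    (hcard : ∀ j, (A j).card = p j)
    (hrel : ∀ j, ∀ a ∈ A j, r j ≤ a)
    (C : J → ℕ) (hC : ∀ j, C j = 1 + (A j).sup id) :
    IP1Feasible p r T (fun j t => if r j ≤ t ∧ t < C j then 1 else 0) ∧
    IP1Cost w r T (fun j t => if r j ≤ t ∧ t < C j then 1 else 0)
      = ∑ j, w j * (((C j - r j : ℕ)) : ℚ) := by
  have hdone : ∀ j, ∀ a ∈ A j, a < C j := fun j a ha => hC j ▸ lt_one_add_sup_id ha
  have hCT : ∀ j, C j ≤ T + 1 := fun j => hC j ▸ one_add_sup_id_le (hrange j)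
  exact ⟨ip1Feasible_aliveIndicator hdisj hcard hrel hdone, ip1Cost_aliveIndicator w hCT⟩

/-- given any schedule `(A j)` with completion times `C j = 1 + max A j`,
the assignment `x j t = 1` iff `r j ≤ t < C j` is a feasible (IP1) solution whose cost
equals the total weighted flow-time `∑_j w_j·(C_j − r_j)` of the schedule. -/
theorem stmt3 {J : Type} [Fintype J] [DecidableEq J] (p r : J → ℕ) (w : J → ℚ)
    (hp : ∀ j, 1 ≤ p j) (hw : ∀ j, 0 ≤ w j)
    (T : ℕ) (hT : T = ∑ j, p j) (hrT : ∀ j, r j < T)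
    (hbusy : ∀ t : ℕ, 1 ≤ t → t ≤ T →
      t ≤ ∑ j ∈ Finset.univ.filter fun j => r j < t, p j)
    (A : J → Finset ℕ)
    (hdisj : ∀ j j', j ≠ j' → Disjoint (A j) (A j'))
    (hrange : ∀ j, A j ⊆ Finset.range T)
    (hcard : ∀ j, (A j).card = p j)
    (hrel : ∀ j, ∀ a ∈ A j, r j ≤ a)
    (C : J → ℕ) (hC : ∀ j, C j = 1 + (A j).sup id) :
    IP1Feasible p r T (fun j t => if r j ≤ t ∧ t < C j then 1 else 0) ∧
    IP1Cost w r T (fun j t => if r j ≤ t ∧ t < C j then 1 else 0)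
      = ∑ j, w j * (((C j - r j : ℕ)) : ℚ) :=
  stmt3_general p r w T A hdisj hrange hcard hrel C hC
end

section
/- Let T = 2^ℓ, let r, r' be integers with 0 ≤ r ≤ r' < T, and let t be a slot with r' ≤ t < T. Let S be the unique segment of Seg(r) containing slot t and S' the unique segment of Seg(r') containing slot t, of classes s and s' respectively (i.e., of lengths 2^s and 2^{s'}). Then s ≥ s'; consequently S' ⊆ S. -/
/-- The procedure `FormSegments`, starting at stage `s` with current time `t`, stopping
once `t ≥ T`.  Each produced entry `(s, a, b)` records the stage `s` at which the
interval `[a, b]` was appended. -/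
def segAux (T : ℕ) (s t : ℕ) : List (ℕ × ℕ × ℕ) :=
  if h : t < T then
    if 2 ^ (s + 1) ∣ t then
      (s, t, t + 2 ^ s) :: (s, t + 2 ^ s, t + 2 ^ (s + 1)) ::
        segAux T (s + 1) (t + 2 ^ (s + 1))
    else
      (s, t, t + 2 ^ s) :: segAux T (s + 1) (t + 2 ^ s)
  else []
termination_by T - t
decreasing_by
  · have h1 : 0 < 2 ^ (s + 1) := Nat.pow_pos (by norm_num)
    omega
  · have h1 : 0 < 2 ^ s := Nat.pow_pos (by norm_num)
    omega

/-- `Seg T r` : the sequence of intervals of `Seg(r)` (forgetting the stages). -/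
def Seg (T rj : ℕ) : List (ℕ × ℕ) := (segAux T 0 rj).map fun x => (x.2.1, x.2.2)

/-!
Both runs of the procedure advance through the stages in lockstep: at the start of stage `s`
the current times `t ≤ t'` of the runs from `r` and `r'` are both multiples of `2^s`, and this
persists after the stage. Hence either the slot is covered during stage `s` by the run from
`r'`, with class `s`, while the run from `r` covers it at stage `s` or later; or neither run
has reached it yet and we pass to the next stage. Every segment is dyadic, and of two dyadic
intervals sharing a slot the one of smaller class lies inside the other.
-/

-- The current time after stage `s` of the procedure, entered at time `t`.
def segNext (s t : ℕ) : ℕ := if 2 ^ (s + 1) ∣ t then t + 2 ^ (s + 1) else t + 2 ^ s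

lemma add_le_of_dvd_of_lt {d x y : ℕ} (hx : d ∣ x) (hy : d ∣ y) (hxy : x < y) : x + d ≤ y := by
  have := Nat.le_of_dvd (Nat.sub_pos_of_lt hxy) (Nat.dvd_sub hy hx)
  omega

lemma lt_segNext (s t : ℕ) : t < segNext s t := by
  unfold segNext
  split_ifs <;> simp

lemma pow_succ_dvd_segNext {s t : ℕ} (h : 2 ^ s ∣ t) : 2 ^ (s + 1) ∣ segNext s t := by
  unfold segNext
  split_ifs with hd
  · exact hd.add dvd_rfl
  · obtain ⟨k, rfl⟩ := h
    rw [pow_succ, Nat.mul_dvd_mul_iff_left (by positivity)] at hd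
    rw [← mul_add_one, pow_succ]
    exact Nat.mul_dvd_mul_left _ (by omega)

lemma segNext_mono {s t t' : ℕ} (h : 2 ^ s ∣ t) (h' : 2 ^ s ∣ t') (htt' : t ≤ t') :
    segNext s t ≤ segNext s t' := by
  have hpow : 2 ^ (s + 1) = 2 ^ s * 2 := pow_succ 2 s
  unfold segNext
  split_ifs with hd hd'
  · omega
  · have hne : t ≠ t' := by rintro rfl; exact hd' hd
    have := add_le_of_dvd_of_lt h h' (lt_of_le_of_ne htt' hne)
    omega
  all_goals omega

lemma mem_segAux {T s t s₁ a b : ℕ} (ht : 2 ^ s ∣ t) (h : (s₁, a, b) ∈ segAux T s t) :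
    (s₁ = s ∧ 2 ^ s ∣ a ∧ b = a + 2 ^ s ∧ t ≤ a ∧ b ≤ segNext s t) ∨
      (s₁, a, b) ∈ segAux T (s + 1) (segNext s t) := by
  rw [segAux] at h
  split_ifs at h with hT hd
  · rw [segNext, if_pos hd]
    simp only [List.mem_cons, Prod.mk.injEq] at h
    rcases h with ⟨rfl, rfl, rfl⟩ | ⟨rfl, rfl, rfl⟩ | h
    · exact .inl ⟨rfl, ht, rfl, le_rfl, by omega⟩
    · exact .inl ⟨rfl, ht.add dvd_rfl, by omega, by omega, le_rfl⟩
    · exact .inr h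
  · rw [segNext, if_neg hd]
    simp only [List.mem_cons, Prod.mk.injEq] at h
    rcases h with ⟨rfl, rfl, rfl⟩ | h
    · exact .inl ⟨rfl, ht, rfl, le_rfl, le_rfl⟩
    · exact .inr h
  · simp at h

lemma segAux_dyadic {T s t s₁ a b : ℕ} (ht : 2 ^ s ∣ t) (h : (s₁, a, b) ∈ segAux T s t) :
    s ≤ s₁ ∧ 2 ^ s₁ ∣ a ∧ b = a + 2 ^ s₁ ∧ t ≤ a := by
  rcases mem_segAux ht h with ⟨rfl, ha, hb, hta, -⟩ | hlater
  · exact ⟨le_rfl, ha, hb, hta⟩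
  · have hT : t < T := by
      by_contra hT
      rw [segAux, dif_neg hT] at h
      simp at h
    obtain ⟨hs, ha, hb, hta⟩ := segAux_dyadic (pow_succ_dvd_segNext ht) hlater
    exact ⟨by omega, ha, hb, (lt_segNext s t).le.trans hta⟩
termination_by T - t
decreasing_by have := lt_segNext s t; omega

lemma dyadic_nested {s s' a a' t : ℕ} (hss' : s' ≤ s) (ha : 2 ^ s ∣ a) (ha' : 2 ^ s' ∣ a')
    (hat : a ≤ t) (hta : t < a + 2 ^ s) (hat' : a' ≤ t) (hta' : t < a' + 2 ^ s') :
    a ≤ a' ∧ a' + 2 ^ s' ≤ a + 2 ^ s := by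
  have hpow : 2 ^ s' ∣ 2 ^ s := pow_dvd_pow 2 hss'
  constructor
  · by_contra! h
    have := add_le_of_dvd_of_lt ha' (hpow.trans ha) h
    omega
  · have := add_le_of_dvd_of_lt ha' ((hpow.trans ha).add hpow) (by omega)
    omega

lemma segAux_nested_of_le {T s t t' u : ℕ} (ht : 2 ^ s ∣ t) (ht' : 2 ^ s ∣ t') (htt' : t ≤ t')
    {s₁ a b : ℕ} (hS : (s₁, a, b) ∈ segAux T s t) (hau : a ≤ u) (hub : u < b)
    {s₁' a' b' : ℕ} (hS' : (s₁', a', b') ∈ segAux T s t') (hau' : a' ≤ u) (hub' : u < b') :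
    s₁' ≤ s₁ ∧ a ≤ a' ∧ b' ≤ b := by
  obtain ⟨hs, ha, rfl, -⟩ := segAux_dyadic ht hS
  obtain ⟨-, ha', rfl, -⟩ := segAux_dyadic ht' hS'
  by_cases hu : u < segNext s t'
  · have hs' : s₁' = s := by
      rcases mem_segAux ht' hS' with ⟨h, -⟩ | hlater
      · exact h
      · have := (segAux_dyadic (pow_succ_dvd_segNext ht') hlater).2.2.2
        omega
    exact ⟨hs' ▸ hs, dyadic_nested (hs' ▸ hs) ha ha' hau hub hau' hub'⟩
  · have hnext := segNext_mono ht ht' htt'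
    have hlater : (s₁, a, a + 2 ^ s₁) ∈ segAux T (s + 1) (segNext s t) := by
      rcases mem_segAux ht hS with ⟨-, -, -, -, h⟩ | h
      · omega
      · exact h
    have hlater' : (s₁', a', a' + 2 ^ s₁') ∈ segAux T (s + 1) (segNext s t') := by
      rcases mem_segAux ht' hS' with ⟨-, -, -, -, h⟩ | h
      · omega
      · exact h
    exact segAux_nested_of_le (pow_succ_dvd_segNext ht) (pow_succ_dvd_segNext ht') hnext
      hlater hau hub hlater' hau' hub'
termination_by T - t'
decreasing_by
  have := lt_segNext s t'
  have hT : t' < T := by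
    by_contra hT
    rw [segAux, dif_neg hT] at hS'
    simp at hS'
  omega

theorem stmt5_general (ℓ r r' t : ℕ) (hrr' : r ≤ r')
    (s a b s' a' b' : ℕ)
    (hS : (s, a, b) ∈ segAux (2 ^ ℓ) 0 r) (ha : a ≤ t) (hb : t + 1 ≤ b)
    (hS' : (s', a', b') ∈ segAux (2 ^ ℓ) 0 r') (ha' : a' ≤ t) (hb' : t + 1 ≤ b') :
    s' ≤ s ∧ a ≤ a' ∧ b' ≤ b :=
  segAux_nested_of_le (by simp) (by simp) hrr' hS ha hb hS' ha' hb'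

/-- if `0 ≤ r ≤ r' < T = 2^ℓ` and `r' ≤ t < T`, and `S = [a,b]` (of class
`s`) is the segment of `Seg(r)` containing slot `t` while `S' = [a',b']` (of class `s'`)
is the segment of `Seg(r')` containing slot `t`, then `s ≥ s'`, and consequently
`S' ⊆ S`. -/
theorem stmt5 (ℓ r r' t : ℕ) (hrr' : r ≤ r') (hr' : r' < 2 ^ ℓ) (hrt : r' ≤ t)
    (ht : t < 2 ^ ℓ)
    (s a b s' a' b' : ℕ)
    (hS : (s, a, b) ∈ segAux (2 ^ ℓ) 0 r) (ha : a ≤ t) (hb : t + 1 ≤ b)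
    (hS' : (s', a', b') ∈ segAux (2 ^ ℓ) 0 r') (ha' : a' ≤ t) (hb' : t + 1 ≤ b') :
    s' ≤ s ∧ a ≤ a' ∧ b' ≤ b :=
  stmt5_general ℓ r r' t hrr' s a b s' a' b' hS ha hb hS' ha' hb'
end

section
/- Let T = 2^ℓ, let 0 ≤ r < T, and let Seg(r) = (S_1, …, S_m) in order of construction. Then for every 1 ≤ i ≤ m, Σ_{i'=1}^{i} l(S_{i'}) ≤ 4·l(S_i), where l(S) denotes the length of the interval S. -/
/-!
At stage `j ≥ s` the procedure appends at most two intervals, each of length `2 ^ j`. Hence the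
intervals up to and including one of stage `j` have total length at most
`2 * (2 ^ s + ⋯ + 2 ^ j) = 4 * 2 ^ j - 2 ^ (s + 1)`; the slack `2 ^ (s + 1)` is the invariant
carried through the recursion from stage `s` to stage `s + 1`.
-/

theorem segAux_prefix_sum_add_le (T s t i : ℕ) (hi : i < (segAux T s t).length) :
    (((segAux T s t).take (i + 1)).map fun x => x.2.2 - x.2.1).sum + 2 ^ (s + 1)
      ≤ 4 * ((segAux T s t)[i].2.2 - (segAux T s t)[i].2.1) := by
  fun_induction segAux T s t generalizing i with
  | case1 s t _ _ ih =>
    have hpow_succ : 2 ^ (s + 1) = 2 * 2 ^ s := pow_succ' 2 s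
    have hpow_two : 2 ^ (s + 2) = 4 * 2 ^ s := by ring
    match i with
    | 0 => simp only [List.take_succ_cons, List.take_zero, List.map_cons, List.map_nil,
        List.sum_cons, List.sum_nil, List.getElem_cons_zero]; omega
    | 1 => simp only [List.take_succ_cons, List.take_zero, List.map_cons, List.map_nil,
        List.sum_cons, List.sum_nil, List.getElem_cons_succ, List.getElem_cons_zero]; omega
    | k + 2 =>
      have htail := ih k (by simpa using hi)
      simp only [List.take_succ_cons, List.map_cons, List.sum_cons,
        List.getElem_cons_succ] at htail ⊢
      omega
  | case2 s t _ _ ih =>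
    have hpow_succ : 2 ^ (s + 1) = 2 * 2 ^ s := pow_succ' 2 s
    match i with
    | 0 => simp only [List.take_succ_cons, List.take_zero, List.map_cons, List.map_nil,
        List.sum_cons, List.sum_nil, List.getElem_cons_zero]; omega
    | k + 1 =>
      have htail := ih k (by simpa using hi)
      simp only [List.take_succ_cons, List.map_cons, List.sum_cons,
        List.getElem_cons_succ] at htail ⊢
      omega
  | case3 => simp at hi

theorem stmt6_general (ℓ r : ℕ) (i : ℕ)
    (hi : i < (segAux (2 ^ ℓ) 0 r).length) :
    (((segAux (2 ^ ℓ) 0 r).take (i + 1)).map fun x => x.2.2 - x.2.1).sum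
      ≤ 4 * (((segAux (2 ^ ℓ) 0 r).get ⟨i, hi⟩).2.2
              - ((segAux (2 ^ ℓ) 0 r).get ⟨i, hi⟩).2.1) :=
  le_of_add_le_left (segAux_prefix_sum_add_le (2 ^ ℓ) 0 r i hi)

/-- for `T = 2^ℓ` and `0 ≤ r < T`, writing `Seg(r) = (S_1, …, S_m)` in
order of construction, for every `i` the total length of the first `i` segments is at
most `4` times the length of the `i`-th segment. -/
theorem stmt6 (ℓ r : ℕ) (hr : r < 2 ^ ℓ) (i : ℕ)
    (hi : i < (segAux (2 ^ ℓ) 0 r).length) :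
    (((segAux (2 ^ ℓ) 0 r).take (i + 1)).map fun x => x.2.2 - x.2.1).sum
      ≤ 4 * (((segAux (2 ^ ℓ) 0 r).get ⟨i, hi⟩).2.2
              - ((segAux (2 ^ ℓ) 0 r).get ⟨i, hi⟩).2.1) :=
  stmt6_general ℓ r i hi
end

section
/- Let T = 2^ℓ, let 0 ≤ r < T, and let Seg(r) = (S_1, …, S_m) in order of construction. Then l(S_1) = 1; for every 1 ≤ i < m, l(S_{i+1}) equals either l(S_i) or 2·l(S_i) (in particular the lengths are non-decreasing); and for every nonnegative integer s, at most two segments of Seg(r) have length 2^s. -/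
/-!
A segment appended at stage `s` has length `2^s`, and each stage appends one or two
segments, so the sequence of stages of `Seg(r)` starts at `0`, increases by steps of `0`
or `1`, and takes every value at most twice. The three claims are the images of these
facts under `s ↦ 2^s`.
-/

def segStages (T s t : ℕ) : List ℕ := (segAux T s t).map Prod.fst

section segStages

variable {T s t : ℕ}

theorem segStages_of_dvd (ht : t < T) (hd : 2 ^ (s + 1) ∣ t) :
    segStages T s t = s :: s :: segStages T (s + 1) (t + 2 ^ (s + 1)) := by
  rw [segStages, segAux, dif_pos ht, if_pos hd]; rfl

theorem segStages_of_not_dvd (ht : t < T) (hd : ¬ 2 ^ (s + 1) ∣ t) :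
    segStages T s t = s :: segStages T (s + 1) (t + 2 ^ s) := by
  rw [segStages, segAux, dif_pos ht, if_neg hd]; rfl

theorem segStages_of_le (ht : T ≤ t) : segStages T s t = [] := by
  rw [segStages, segAux, dif_neg (Nat.not_lt.mpr ht)]; rfl

theorem segStages_eq_cons (ht : t < T) : ∃ l, segStages T s t = s :: l := by
  by_cases hd : 2 ^ (s + 1) ∣ t
  · exact ⟨_, segStages_of_dvd ht hd⟩
  · exact ⟨_, segStages_of_not_dvd ht hd⟩

theorem eq_of_mem_head?_segStages {b : ℕ} (hb : b ∈ (segStages T s t).head?) : b = s := by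
  by_cases ht : t < T
  · obtain ⟨l, hl⟩ := segStages_eq_cons (s := s) ht
    simpa [hl, eq_comm] using hb
  · simp [segStages_of_le (Nat.le_of_not_lt ht)] at hb

theorem le_of_mem_segStages {a : ℕ} : a ∈ segStages T s t → s ≤ a := by
  induction s, t using segAux.induct (T := T) with
  | case1 s t ht hd ih =>
    rw [segStages_of_dvd ht hd]
    rintro (_ | ⟨_, _ | ⟨_, ha⟩⟩)
    exacts [le_rfl, le_rfl, (ih ha).trans' (Nat.le_succ s)]
  | case2 s t ht hd ih =>
    rw [segStages_of_not_dvd ht hd]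
    rintro (_ | ⟨_, ha⟩)
    exacts [le_rfl, (ih ha).trans' (Nat.le_succ s)]
  | case3 s t ht =>
    simp [segStages_of_le (Nat.le_of_not_lt ht)]

theorem isChain_segStages :
    (segStages T s t).IsChain (fun a b => b = a ∨ b = a + 1) := by
  induction s, t using segAux.induct (T := T) with
  | case1 s t ht hd ih =>
    rw [segStages_of_dvd ht hd]
    exact .cons_cons (.inl rfl) <|
      List.isChain_cons.mpr ⟨fun _ hb => .inr (eq_of_mem_head?_segStages hb), ih⟩
  | case2 s t ht hd ih =>
    rw [segStages_of_not_dvd ht hd]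
    exact List.isChain_cons.mpr ⟨fun _ hb => .inr (eq_of_mem_head?_segStages hb), ih⟩
  | case3 s t ht =>
    simp [segStages_of_le (Nat.le_of_not_lt ht)]

theorem count_segStages_eq_zero {a : ℕ} (ha : a < s) : (segStages T s t).count a = 0 :=
  List.count_eq_zero.mpr fun hmem => Nat.not_le_of_lt ha (le_of_mem_segStages hmem)

theorem count_segStages_le_two (a : ℕ) : (segStages T s t).count a ≤ 2 := by
  induction s, t using segAux.induct (T := T) with
  | case1 s t ht hd ih =>
    rw [segStages_of_dvd ht hd]
    rcases eq_or_ne a s with rfl | has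
    · simp [count_segStages_eq_zero (Nat.lt_succ_self a)]
    · simpa [List.count_cons, has.symm] using ih
  | case2 s t ht hd ih =>
    rw [segStages_of_not_dvd ht hd]
    rcases eq_or_ne a s with rfl | has
    · simp [count_segStages_eq_zero (Nat.lt_succ_self a)]
    · simpa [List.count_cons, has.symm] using ih
  | case3 s t ht =>
    simp [segStages_of_le (Nat.le_of_not_lt ht)]

theorem map_length_segAux :
    (segAux T s t).map (fun x => x.2.2 - x.2.1) = (segStages T s t).map (2 ^ ·) := by
  induction s, t using segAux.induct (T := T) with
  | case1 s t ht hd ih =>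
    rw [segStages_of_dvd ht hd, segAux, dif_pos ht, if_pos hd]
    simp only [List.map_cons, ih]
    have := pow_succ 2 s
    congr 2 <;> omega
  | case2 s t ht hd ih =>
    rw [segStages_of_not_dvd ht hd, segAux, dif_pos ht, if_neg hd]
    simp only [List.map_cons, ih]
    congr 1; omega
  | case3 s t ht =>
    rw [segStages_of_le (Nat.le_of_not_lt ht), segAux, dif_neg ht]; rfl

end segStages

theorem map_length_Seg (T r : ℕ) :
    (Seg T r).map (fun S => S.2 - S.1) = (segStages T 0 r).map (2 ^ ·) := by
  rw [Seg, List.map_map, ← map_length_segAux]; rfl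

/-- for `T = 2^ℓ` and `0 ≤ r < T`, writing `Seg(r) = (S_1, …, S_m)` in
order of construction: `l(S_1) = 1`; each `l(S_{i+1})` is either `l(S_i)` or
`2·l(S_i)` (so lengths are non-decreasing); and for every `s` at most two segments
have length `2^s`. -/
theorem stmt7 (ℓ r : ℕ) (hr : r < 2 ^ ℓ) :
    (∃ hne : Seg (2 ^ ℓ) r ≠ [],
      ((Seg (2 ^ ℓ) r).head hne).2 - ((Seg (2 ^ ℓ) r).head hne).1 = 1) ∧
    List.Chain' (fun S S' : ℕ × ℕ =>
      S'.2 - S'.1 = S.2 - S.1 ∨ S'.2 - S'.1 = 2 * (S.2 - S.1)) (Seg (2 ^ ℓ) r) ∧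
    ∀ s : ℕ, (Seg (2 ^ ℓ) r).countP (fun S => decide (S.2 - S.1 = 2 ^ s)) ≤ 2 := by
  have hlen := map_length_Seg (2 ^ ℓ) r
  refine ⟨?_, ?_, fun s => ?_⟩
  · obtain ⟨l, hl⟩ := segStages_eq_cons (s := 0) hr
    rw [hl, List.map_cons, pow_zero, List.map_eq_cons_iff] at hlen
    obtain ⟨S, _, hS, hS1, -⟩ := hlen
    simp only [hS]
    exact ⟨List.cons_ne_nil _ _, hS1⟩
  · refine (List.isChain_map (R := fun a b => b = a ∨ b = 2 * a)
      (fun S : ℕ × ℕ => S.2 - S.1)).mp ?_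
    rw [hlen, List.isChain_map]
    exact isChain_segStages.imp fun a b hab => by
      rcases hab with rfl | rfl <;> simp [pow_succ, mul_comm]
  · calc (Seg (2 ^ ℓ) r).countP (fun S => decide (S.2 - S.1 = 2 ^ s))
        = ((segStages (2 ^ ℓ) 0 r).map (2 ^ ·)).count (2 ^ s) := by
          rw [← hlen, List.count_eq_countP, List.countP_map]; rfl
      _ = (segStages (2 ^ ℓ) 0 r).count s :=
          List.count_map_of_injective _ _ (Nat.pow_right_injective le_rfl) s
      _ ≤ 2 := count_segStages_le_two s
end

section
/- Let T = 2^ℓ and let 0 ≤ r < T. Then the number of segments in Seg(r) is at most 2(ℓ+1). -/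
/-!
At stage `s` the current time `t` is always a multiple of `2 ^ s`: either `2 ^ (s + 1) ∣ t`
already, or `t` is an odd multiple of `2 ^ s` and adding `2 ^ s` makes it even. Hence each stage
appends at most two intervals, and at stage `ℓ` the only multiple of `2 ^ ℓ` below `T = 2 ^ ℓ` is
`0`, which is finished after one more stage of (at most) two intervals.
-/

lemma segAux_of_le {T t : ℕ} (s : ℕ) (h : T ≤ t) : segAux T s t = [] := by
  rw [segAux, dif_neg (by omega)]

lemma two_pow_succ_dvd_add_two_pow {s t : ℕ} (hd : 2 ^ s ∣ t) (hnd : ¬ 2 ^ (s + 1) ∣ t) :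
    2 ^ (s + 1) ∣ t + 2 ^ s := by
  obtain ⟨c, rfl⟩ := hd
  have hc : c % 2 = 1 := by
    by_contra hc
    exact hnd ⟨c / 2, by rw [pow_succ, mul_assoc]; congr 1; omega⟩
  exact ⟨c / 2 + 1, by rw [pow_succ]; nth_rw 1 [← Nat.div_add_mod c 2, hc]; ring⟩

lemma exists_length_segAux_le_succ (T : ℕ) {s t : ℕ} (hd : 2 ^ s ∣ t) :
    ∃ t', 2 ^ (s + 1) ∣ t' ∧ (segAux T s t).length ≤ (segAux T (s + 1) t').length + 2 := by
  rw [segAux]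
  split_ifs with hlt hd'
  · exact ⟨_, dvd_add hd' dvd_rfl, by simp⟩
  · exact ⟨_, two_pow_succ_dvd_add_two_pow hd hd', by simp⟩
  · exact ⟨0, dvd_zero _, by simp⟩

lemma length_segAux_two_pow_le_two {ℓ t : ℕ} (hd : 2 ^ ℓ ∣ t) :
    (segAux (2 ^ ℓ) ℓ t).length ≤ 2 := by
  by_cases hlt : t < 2 ^ ℓ
  · obtain rfl := Nat.eq_zero_of_dvd_of_lt hd hlt
    rw [segAux, dif_pos hlt, if_pos (dvd_zero _), segAux_of_le _ (by rw [zero_add, pow_succ]; omega)]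
    simp
  · simp [segAux_of_le _ (not_lt.mp hlt)]

lemma length_segAux_le (n : ℕ) {s t : ℕ} (hd : 2 ^ s ∣ t) :
    (segAux (2 ^ (s + n)) s t).length ≤ 2 * (n + 1) := by
  induction n generalizing s t with
  | zero => exact length_segAux_two_pow_le_two hd
  | succ n ih =>
    obtain ⟨t', hd', hlen⟩ := exists_length_segAux_le_succ (2 ^ (s + (n + 1))) hd
    have := ih hd'
    rw [add_right_comm, add_assoc] at this
    omega

theorem stmt8_general (ℓ r : ℕ) :
    (segAux (2 ^ ℓ) 0 r).length ≤ 2 * (ℓ + 1) := by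
  simpa using length_segAux_le ℓ (s := 0) (t := r) (by simp)

/-- for `T = 2^ℓ` and `0 ≤ r < T`, the number of segments of `Seg(r)`
is at most `2(ℓ+1)`. -/
theorem stmt8 (ℓ r : ℕ) (hr : r < 2 ^ ℓ) :
    (segAux (2 ^ ℓ) 0 r).length ≤ 2 * (ℓ + 1) :=
  stmt8_general ℓ r
end

section
/- Assume T = Σ_j p_j is a power of 2. For every feasible solution x to (IP1) there exists a feasible solution y to (IP2) whose cost is at most 8 times the cost of x. -/
/-- `segOf T rj t` : the (unique) segment of `Seg(rj)` containing slot `t`. -/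
def segOf (T rj t : ℕ) : ℕ × ℕ :=
  ((Seg T rj).find? fun S => decide (S.1 ≤ t ∧ t + 1 ≤ S.2)).getD (0, 0)

/-- (IP2) feasibility: `y j S ∈ {0,1}` for each job segment `(j, S)` with `S ∈ Seg(r j)`,
and for every interval `I = [s,t]` with `0 ≤ s ≤ t < T`,
`∑_{j ∈ J(I)} p j · y (j, S_j(t)) ≥ p(J(I)) − (t − s)`, where `S_j(t)` is the segment
of `Seg(r j)` containing slot `t`. -/
def IP2Feasible {J : Type} [Fintype J] (p r : J → ℕ) (T : ℕ) (y : J → ℕ × ℕ → ℕ) : Prop :=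
  (∀ j S, S ∈ Seg T (r j) → y j S ≤ 1) ∧
  (∀ s t : ℕ, s ≤ t → t < T →
    (∑ j ∈ Finset.univ.filter fun j => s ≤ r j ∧ r j ≤ t, (p j : ℤ)) - ((t : ℤ) - (s : ℤ))
      ≤ ∑ j ∈ Finset.univ.filter fun j => s ≤ r j ∧ r j ≤ t,
          (p j : ℤ) * (y j (segOf T (r j) t) : ℤ))

/-- Cost of an (IP2) solution: `∑_j ∑_{S ∈ Seg(j)} w_j · l(S) · y (j, S)`. -/
def IP2Cost {J : Type} [Fintype J] (w : J → ℚ) (r : J → ℕ) (T : ℕ)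
    (y : J → ℕ × ℕ → ℕ) : ℚ :=
  ∑ j, ((Seg T (r j)).map fun S => w j * ((S.2 - S.1 : ℕ) : ℚ) * (y j S : ℚ)).sum

lemma le_fst_of_mem_segAux {T s t : ℕ} {e : ℕ × ℕ × ℕ} (he : e ∈ segAux T s t) :
    t ≤ e.2.1 := by
  induction s, t using segAux.induct T with
  | case1 s t h hdvd ih =>
    rw [segAux, dif_pos h, if_pos hdvd] at he
    rcases List.mem_cons.mp he with rfl | he
    · exact le_rfl
    rcases List.mem_cons.mp he with rfl | he
    · exact Nat.le_add_right _ _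
    · exact (ih he).trans' (Nat.le_add_right _ _)
  | case2 s t h hdvd ih =>
    rw [segAux, dif_pos h, if_neg hdvd] at he
    rcases List.mem_cons.mp he with rfl | he
    · exact le_rfl
    · exact (ih he).trans' (Nat.le_add_right _ _)
  | case3 s t h =>
    rw [segAux, dif_neg h] at he
    simp at he

-- `2 ^ s ≤ t + 1` excludes `t = 0` at a positive stage, where a segment could overshoot `T`.
lemma fst_le_of_mem_segAux {ℓ T s t : ℕ} (hT : T = 2 ^ ℓ) (hst : 2 ^ s ≤ t + 1)
    {e : ℕ × ℕ × ℕ} (he : e ∈ segAux T s t) : e.2.1 ≤ T := by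
  induction s, t using segAux.induct T with
  | case1 s t h hdvd ih =>
    rw [segAux, dif_pos h, if_pos hdvd] at he
    have hpow : 2 ^ (s + 1) = 2 * 2 ^ s := by ring
    -- `t` and `T` are both multiples of `2 ^ (s + 1)`, so the second half-segment still fits.
    have hfit : t + 2 ^ s ≤ T := by
      rcases Nat.eq_zero_or_pos t with rfl | ht
      · have : s = 0 := by
          by_contra hs
          have := Nat.one_lt_two_pow hs
          omega
        subst this
        simpa [Nat.one_le_iff_ne_zero] using h.ne'
      have hlt : s + 1 < ℓ := by
        rw [← Nat.pow_lt_pow_iff_right (by norm_num : 1 < 2), ← hT]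
        exact (Nat.le_of_dvd ht hdvd).trans_lt h
      have hdvdT : 2 ^ (s + 1) ∣ T - t := Nat.dvd_sub (hT ▸ pow_dvd_pow 2 hlt.le) hdvd
      have := Nat.le_of_dvd (Nat.sub_pos_of_lt h) hdvdT
      omega
    rcases List.mem_cons.mp he with rfl | he
    · exact h.le
    rcases List.mem_cons.mp he with rfl | he
    · exact hfit
    · exact ih (by omega) he
  | case2 s t h hdvd ih =>
    rw [segAux, dif_pos h, if_neg hdvd] at he
    rcases List.mem_cons.mp he with rfl | he
    · exact h.le
    · exact ih (by rw [pow_succ]; omega) he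
  | case3 s t h =>
    rw [segAux, dif_neg h] at he
    simp at he

lemma exists_mem_segAux_of_le_of_lt {T t : ℕ} (htT : t < T) {s t₀ : ℕ} (ht₀ : t₀ ≤ t) :
    ∃ e ∈ segAux T s t₀, e.2.1 ≤ t ∧ t + 1 ≤ e.2.2 := by
  induction s, t₀ using segAux.induct T with
  | case1 s t₀ h hdvd ih =>
    rw [segAux, dif_pos h, if_pos hdvd]
    by_cases h₁ : t < t₀ + 2 ^ s
    · exact ⟨_, List.mem_cons_self, by dsimp only; omega⟩
    by_cases h₂ : t < t₀ + 2 ^ (s + 1)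
    · exact ⟨_, List.mem_cons_of_mem _ List.mem_cons_self, by dsimp only; omega⟩
    obtain ⟨e, he, hte⟩ := ih (by omega)
    exact ⟨e, List.mem_cons_of_mem _ (List.mem_cons_of_mem _ he), hte⟩
  | case2 s t₀ h hdvd ih =>
    rw [segAux, dif_pos h, if_neg hdvd]
    by_cases h₁ : t < t₀ + 2 ^ s
    · exact ⟨_, List.mem_cons_self, by dsimp only; omega⟩
    obtain ⟨e, he, hte⟩ := ih (by omega)
    exact ⟨e, List.mem_cons_of_mem _ he, hte⟩
  | case3 s t₀ h => omega

lemma sum_segAux_eq_zero {T s t n : ℕ} (hn : n ≤ t) :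
    ((segAux T s t).map fun e => if e.2.1 < n then e.2.2 - e.2.1 else 0).sum = 0 :=
  List.sum_eq_zero fun _ ha => by
    obtain ⟨e, he, rfl⟩ := List.mem_map.mp ha
    exact if_neg (not_lt.mpr (hn.trans (le_fst_of_mem_segAux he)))

lemma sum_segAux_add_lt {T s t n : ℕ} (htn : t < n) :
    ((segAux T s t).map fun e => if e.2.1 < n then e.2.2 - e.2.1 else 0).sum + 2 * t
      < 2 * n + 2 ^ s := by
  induction s, t using segAux.induct T with
  | case1 s t h hdvd ih =>
    rw [segAux, dif_pos h, if_pos hdvd]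
    have hpow : 2 ^ (s + 1) = 2 * 2 ^ s := by ring
    simp only [List.map_cons, List.sum_cons]
    by_cases hnext : t + 2 ^ (s + 1) < n
    · have := ih hnext
      split_ifs <;> omega
    · rw [sum_segAux_eq_zero (by omega)]
      split_ifs <;> omega
  | case2 s t h hdvd ih =>
    rw [segAux, dif_pos h, if_neg hdvd]
    have hpow : 2 ^ (s + 1) = 2 * 2 ^ s := by ring
    simp only [List.map_cons, List.sum_cons, if_pos htn]
    by_cases hnext : t + 2 ^ s < n
    · have := ih hnext
      omega
    · rw [sum_segAux_eq_zero (by omega)]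
      omega
  | case3 s t h =>
    rw [segAux, dif_neg h]
    simp only [List.map_nil, List.sum_nil]
    have := Nat.one_le_two_pow (n := s)
    omega

lemma le_fst_of_mem_seg {T r : ℕ} {S : ℕ × ℕ} (hS : S ∈ Seg T r) : r ≤ S.1 := by
  obtain ⟨e, he, rfl⟩ := List.mem_map.mp hS
  exact le_fst_of_mem_segAux he

lemma fst_le_of_mem_seg {ℓ T r : ℕ} (hT : T = 2 ^ ℓ) {S : ℕ × ℕ} (hS : S ∈ Seg T r) :
    S.1 ≤ T := by
  obtain ⟨e, he, rfl⟩ := List.mem_map.mp hS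
  exact fst_le_of_mem_segAux hT (by simp) he

lemma segOf_spec {T r t : ℕ} (hrt : r ≤ t) (htT : t < T) :
    segOf T r t ∈ Seg T r ∧ (segOf T r t).1 ≤ t := by
  obtain ⟨e, he, hle, hlt⟩ := exists_mem_segAux_of_le_of_lt htT (s := 0) hrt
  have hsome : ((Seg T r).find? fun S => decide (S.1 ≤ t ∧ t + 1 ≤ S.2)).isSome :=
    List.find?_isSome.mpr ⟨_, List.mem_map_of_mem he, by simp [hle, hlt]⟩
  obtain ⟨S, hS⟩ := Option.isSome_iff_exists.mp hsome
  have hsegOf : segOf T r t = S := by rw [segOf, hS]; rfl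
  have hprop : S.1 ≤ t ∧ t + 1 ≤ S.2 := by simpa using List.find?_some hS
  rw [hsegOf]
  exact ⟨List.mem_of_find?_eq_some hS, hprop.1⟩

lemma sum_seg_length_le (T r n : ℕ) :
    ((Seg T r).map fun S => if S.1 < n then S.2 - S.1 else 0).sum ≤ 2 * (n - r) := by
  simp only [Seg, List.map_map, Function.comp_def]
  rcases lt_or_ge r n with hrn | hnr
  · have := sum_segAux_add_lt (T := T) (s := 0) hrn
    rw [pow_zero] at this
    omega
  · rw [sum_segAux_eq_zero hnr]
    exact Nat.zero_le _

lemma lt_add_sum_Icc_of_ne_zero {f : ℕ → ℕ} {r T a : ℕ} (hf : AntitoneOn f (Set.Icc r T))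
    (ha : a ∈ Set.Icc r T) (hfa : f a ≠ 0) : a < r + ∑ t ∈ Finset.Icc r T, f t := by
  have hcard : (Finset.Icc r a).card ≤ ∑ t ∈ Finset.Icc r T, f t :=
    calc (Finset.Icc r a).card = ∑ _t ∈ Finset.Icc r a, 1 := by simp
      _ ≤ ∑ t ∈ Finset.Icc r a, f t := Finset.sum_le_sum fun t ht => by
          have ht := Finset.mem_Icc.mp ht
          have := hf ⟨ht.1, ht.2.trans ha.2⟩ ha ht.2
          omega
      _ ≤ ∑ t ∈ Finset.Icc r T, f t :=
          Finset.sum_le_sum_of_subset (Finset.Icc_subset_Icc_right ha.2)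
  rw [Nat.card_Icc] at hcard
  omega

lemma sum_seg_length_mul_le {ℓ T r : ℕ} (hT : T = 2 ^ ℓ) {f : ℕ → ℕ}
    (hf₁ : ∀ t ∈ Set.Icc r T, f t ≤ 1) (hf : AntitoneOn f (Set.Icc r T)) :
    ((Seg T r).map fun S => (S.2 - S.1) * f S.1).sum ≤ 2 * ∑ t ∈ Finset.Icc r T, f t := by
  -- A 0/1 antitone `f` on `[r, T]` is `1` exactly on the initial interval `[r, n)`.
  set n := r + ∑ t ∈ Finset.Icc r T, f t
  have hpoint : ∀ S ∈ Seg T r, (S.2 - S.1) * f S.1 ≤ if S.1 < n then S.2 - S.1 else 0 := by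
    intro S hS
    have hS₁ : S.1 ∈ Set.Icc r T := ⟨le_fst_of_mem_seg hS, fst_le_of_mem_seg hT hS⟩
    by_cases h₀ : f S.1 = 0
    · simp [h₀]
    · rw [if_pos (lt_add_sum_Icc_of_ne_zero hf hS₁ h₀)]
      simpa using Nat.mul_le_mul_left (S.2 - S.1) (hf₁ _ hS₁)
  calc _ ≤ _ := List.sum_le_sum hpoint
    _ ≤ 2 * (n - r) := sum_seg_length_le T r n
    _ = _ := by omega

section IP

variable {J : Type} [Fintype J] {p r : J → ℕ} {T : ℕ} {x : J → ℕ → ℕ}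

lemma IP1Feasible.antitoneOn (hx : IP1Feasible p r T x) (j : J) :
    AntitoneOn (x j) (Set.Icc (r j) T) :=
  antitoneOn_of_succ_le Set.ordConnected_Icc fun a _ ha ha' => by
    rw [Order.succ_eq_add_one] at ha' ⊢
    simpa using hx.2.1 j (a + 1) (Nat.lt_add_one_of_le ha.1) ha'.2

def toIP2 (x : J → ℕ → ℕ) : J → ℕ × ℕ → ℕ := fun j S => x j S.1

lemma ip2Feasible_toIP2 {ℓ : ℕ} (hT : T = 2 ^ ℓ) (hx : IP1Feasible p r T x) :
    IP2Feasible p r T (toIP2 x) := by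
  refine ⟨fun j S hS => hx.1 j S.1 (le_fst_of_mem_seg hS) (fst_le_of_mem_seg hT hS),
    fun s t hst htT => (hx.2.2 s t hst htT.le).trans (Finset.sum_le_sum fun j hj => ?_)⟩
  have hrt := (Finset.mem_filter.mp hj).2.2
  obtain ⟨hmem, hle⟩ := segOf_spec hrt htT
  have : x j t ≤ toIP2 x j (segOf T (r j) t) :=
    hx.antitoneOn j ⟨le_fst_of_mem_seg hmem, fst_le_of_mem_seg hT hmem⟩ ⟨hrt, htT.le⟩ hle
  gcongr

lemma ip2Cost_toIP2_le {ℓ : ℕ} (hT : T = 2 ^ ℓ) {w : J → ℚ} (hw : ∀ j, 0 ≤ w j)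
    (hx : IP1Feasible p r T x) : IP2Cost w r T (toIP2 x) ≤ 2 * IP1Cost w r T x := by
  rw [IP2Cost, IP1Cost, Finset.mul_sum]
  refine Finset.sum_le_sum fun j _ => ?_
  have key := sum_seg_length_mul_le hT (fun t ht => hx.1 j t ht.1 ht.2) (hx.antitoneOn j)
  calc ((Seg T (r j)).map fun S => w j * ((S.2 - S.1 : ℕ) : ℚ) * (toIP2 x j S : ℚ)).sum
      = w j * (((Seg T (r j)).map fun S => (S.2 - S.1) * x j S.1).sum : ℕ) := by
        rw [Nat.cast_list_sum, List.map_map, ← List.sum_map_mul_left]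
        refine congrArg List.sum (List.map_congr_left fun S _ => ?_)
        simp only [toIP2, Function.comp_apply, Nat.cast_mul]
        ring
    _ ≤ w j * ((2 * ∑ t ∈ Finset.Icc (r j) T, x j t : ℕ) : ℚ) := by
        gcongr
        exact hw j
    _ = 2 * ∑ t ∈ Finset.Icc (r j) T, w j * (x j t : ℚ) := by
        push_cast
        rw [← Finset.mul_sum]
        ring

lemma ip1Cost_nonneg {w : J → ℚ} (hw : ∀ j, 0 ≤ w j) (x : J → ℕ → ℕ) :
    0 ≤ IP1Cost w r T x :=
  Finset.sum_nonneg fun j _ => Finset.sum_nonneg fun _ _ => mul_nonneg (hw j) (Nat.cast_nonneg _)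

end IP

theorem stmt10_general {J : Type} [Fintype J] (p r : J → ℕ) (w : J → ℚ)
    (hw : ∀ j, 0 ≤ w j)
    (ℓ T : ℕ) (hT2 : T = 2 ^ ℓ)
    (x : J → ℕ → ℕ) (hx : IP1Feasible p r T x) :
    ∃ y : J → ℕ × ℕ → ℕ, IP2Feasible p r T y ∧
      IP2Cost w r T y ≤ 8 * IP1Cost w r T x := by
  refine ⟨toIP2 x, ip2Feasible_toIP2 hT2 hx, (ip2Cost_toIP2_le hT2 hw hx).trans ?_⟩
  linarith [ip1Cost_nonneg (r := r) (T := T) hw x]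

/-- if `T = ∑_j p_j` is a power of two, then every feasible solution `x`
of (IP1) yields a feasible solution `y` of (IP2) of cost at most `8` times the cost
of `x`. -/
theorem stmt10 {J : Type} [Fintype J] (p r : J → ℕ) (w : J → ℚ)
    (hp : ∀ j, 1 ≤ p j) (hw : ∀ j, 0 ≤ w j)
    (ℓ T : ℕ) (hT : T = ∑ j, p j) (hT2 : T = 2 ^ ℓ)
    (hrT : ∀ j, r j < T)
    (hbusy : ∀ t : ℕ, 1 ≤ t → t ≤ T →
      t ≤ ∑ j ∈ Finset.univ.filter fun j => r j < t, p j)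
    (x : J → ℕ → ℕ) (hx : IP1Feasible p r T x) :
    ∃ y : J → ℕ × ℕ → ℕ, IP2Feasible p r T y ∧
      IP2Cost w r T y ≤ 8 * IP1Cost w r T x :=
  stmt10_general p r w hw ℓ T hT2 x hx
end

section
/- Let q_1, …, q_s ∈ ℕ be priorities assigned to the positions 1, …, s. For every integer k ≥ 1, the number of distinct sets of the form E(a,b,π) = {i : a ≤ i ≤ b and q_i ≥ π} (over all 1 ≤ a ≤ b ≤ s and π ∈ ℕ) that are nonempty and have at most k elements is at most s·k². -/
/-- Two subsets of `T` that are upward closed within `T` and have equal cardinality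
are contained in one another. -/
private lemma upclosed_subset_aux {α : Type*} [LinearOrder α] [DecidableEq α]
    {T A B : Finset α}
    (hA : A ⊆ T) (hB : B ⊆ T)
    (hAup : ∀ x ∈ A, ∀ y ∈ T, x ≤ y → y ∈ A)
    (hBup : ∀ x ∈ B, ∀ y ∈ T, x ≤ y → y ∈ B)
    (hcard : A.card = B.card) : A ⊆ B := by
  intro x hx
  by_contra hxB
  have hsub : B ⊆ A.erase x := by
    intro y hy
    rcases le_or_gt y x with h | h
    · exact absurd (hBup y hy x (hA hx) h) hxB
    · exact Finset.mem_erase.mpr ⟨h.ne', hAup x hx y (hB hy) h.le⟩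
  have h1 : B.card ≤ (A.erase x).card := Finset.card_le_card hsub
  rw [Finset.card_erase_of_mem hx] at h1
  have h2 : 1 ≤ A.card := Finset.card_pos.mpr ⟨x, hx⟩
  omega

private lemma upclosed_eq_aux {α : Type*} [LinearOrder α] [DecidableEq α]
    {T A B : Finset α}
    (hA : A ⊆ T) (hB : B ⊆ T)
    (hAup : ∀ x ∈ A, ∀ y ∈ T, x ≤ y → y ∈ A)
    (hBup : ∀ x ∈ B, ∀ y ∈ T, x ≤ y → y ∈ B)
    (hcard : A.card = B.card) : A = B :=
  Finset.Subset.antisymm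
    (upclosed_subset_aux hA hB hAup hBup hcard)
    (upclosed_subset_aux hB hA hBup hAup hcard.symm)

private lemma downclosed_eq_aux {α : Type*} [LinearOrder α] [DecidableEq α]
    {T A B : Finset α}
    (hA : A ⊆ T) (hB : B ⊆ T)
    (hAdn : ∀ x ∈ A, ∀ y ∈ T, y ≤ x → y ∈ A)
    (hBdn : ∀ x ∈ B, ∀ y ∈ T, y ≤ x → y ∈ B)
    (hcard : A.card = B.card) : A = B :=
  upclosed_eq_aux (α := αᵒᵈ) (T := T) hA hB hAdn hBdn hcard

/-- (shallow cell complexity of the priority multi-cut matrix on a path)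
given priorities `q_1, …, q_s` on the positions of a path, for every `k ≥ 1` the number
of distinct nonempty sets `E(a,b,π) = {i : a ≤ i ≤ b ∧ q i ≥ π}` with at most `k`
elements is at most `s·k²`. -/
theorem stmt12 (s k : ℕ) (hk : 1 ≤ k) (q : Fin s → ℕ) :
    Set.ncard {E : Finset (Fin s) | E.Nonempty ∧ E.card ≤ k ∧
        ∃ (a b : Fin s) (π : ℕ), a ≤ b ∧
          E = Finset.univ.filter fun i => a ≤ i ∧ i ≤ b ∧ π ≤ q i}
      ≤ s * k ^ 2 := by
  classical
  rcases Nat.eq_zero_or_pos s with hs | hs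
  · subst hs
    have hempty : {E : Finset (Fin 0) | E.Nonempty ∧ E.card ≤ k ∧
        ∃ (a b : Fin 0) (π : ℕ), a ≤ b ∧
          E = Finset.univ.filter fun i => a ≤ i ∧ i ≤ b ∧ π ≤ q i} = ∅ := by
      ext E
      simp only [Set.mem_setOf_eq, Set.mem_empty_iff_false, iff_false, not_and]
      rintro ⟨i, -⟩
      exact i.elim0
    rw [hempty]
    simp
  -- positive case
  have hkpos : 0 < k := hk
  set j : Finset (Fin s) → Fin s := fun E =>
    if h : (E.filter fun i => ∀ m ∈ E, q i ≤ q m).Nonempty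
    then (E.filter fun i => ∀ m ∈ E, q i ≤ q m).min' h else ⟨0, hs⟩ with hjdef
  have hjE : ∀ E : Finset (Fin s), E.Nonempty →
      j E ∈ E ∧ ∀ m ∈ E, q (j E) ≤ q m := by
    intro E hE
    obtain ⟨i, hiE, hi⟩ := E.exists_min_image q hE
    have hA : (E.filter fun i => ∀ m ∈ E, q i ≤ q m).Nonempty :=
      ⟨i, Finset.mem_filter.mpr ⟨hiE, hi⟩⟩
    have hmem := Finset.min'_mem _ hA
    have : j E = (E.filter fun i => ∀ m ∈ E, q i ≤ q m).min' hA := by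
      simp only [hjdef, dif_pos hA]
    rw [this]
    exact ⟨(Finset.mem_filter.mp hmem).1, (Finset.mem_filter.mp hmem).2⟩
  set f : Finset (Fin s) → Fin s × Fin k × Fin k := fun E =>
    (j E, ⟨(E.filter fun i => i < j E).card % k, Nat.mod_lt _ hkpos⟩,
          ⟨(E.filter fun i => j E < i).card % k, Nat.mod_lt _ hkpos⟩) with hfdef
  refine le_trans (Set.ncard_le_ncard_of_injOn f
    (fun E _ => Set.mem_univ (α := Fin s × Fin k × Fin k) _) ?_ Set.finite_univ) ?_
  swap
  · rw [Set.ncard_univ, Nat.card_eq_fintype_card]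
    simp [Fintype.card_prod, pow_two, mul_assoc]
  -- injectivity
  intro E hE E' hE' hfeq
  obtain ⟨hEne, hEcard, a, b, π, hab, hEeq⟩ := hE
  obtain ⟨hEne', hEcard', a', b', π', hab', hEeq'⟩ := hE'
  obtain ⟨hjmem, hjmin⟩ := hjE E hEne
  obtain ⟨hjmem', hjmin'⟩ := hjE E' hEne'
  -- components of f equality
  have hj0 : j E = j E' := congrArg Prod.fst hfeq
  have hl0 : (E.filter fun i => i < j E).card % k
      = (E'.filter fun i => i < j E').card % k := by
    have := congrArg (fun p => (p.2.1 : Fin k).val) hfeq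
    simpa using this
  have hr0 : (E.filter fun i => j E < i).card % k
      = (E'.filter fun i => j E' < i).card % k := by
    have := congrArg (fun p => (p.2.2 : Fin k).val) hfeq
    simpa using this
  -- the counts are < k
  have hlt : ∀ (F : Finset (Fin s)) (p : Fin s → Prop) [DecidablePred p],
      F.card ≤ k → j F ∈ F → ¬ p (j F) → (F.filter p).card < k := by
    intro F p _ hFc hjF hpj
    have hss : F.filter p ⊂ F := by
      refine (Finset.ssubset_iff_of_subset (Finset.filter_subset _ _)).mpr ?_
      exact ⟨j F, hjF, by simp [hpj]⟩
    exact lt_of_lt_of_le (Finset.card_lt_card hss) hFc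
  have hlE : (E.filter fun i => i < j E).card < k :=
    hlt E _ hEcard hjmem (lt_irrefl _)
  have hlE' : (E'.filter fun i => i < j E').card < k :=
    hlt E' _ hEcard' hjmem' (lt_irrefl _)
  have hrE : (E.filter fun i => j E < i).card < k :=
    hlt E _ hEcard hjmem (lt_irrefl _)
  have hrE' : (E'.filter fun i => j E' < i).card < k :=
    hlt E' _ hEcard' hjmem' (lt_irrefl _)
  have hl : (E.filter fun i => i < j E).card = (E'.filter fun i => i < j E').card := by
    rwa [Nat.mod_eq_of_lt hlE, Nat.mod_eq_of_lt hlE'] at hl0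
  have hr : (E.filter fun i => j E < i).card = (E'.filter fun i => j E' < i).card := by
    rwa [Nat.mod_eq_of_lt hrE, Nat.mod_eq_of_lt hrE'] at hr0
  -- membership characterizations and convexity
  have hmemE : ∀ i, i ∈ E ↔ a ≤ i ∧ i ≤ b ∧ π ≤ q i := by
    intro i; rw [hEeq]; simp
  have hmemE' : ∀ i, i ∈ E' ↔ a' ≤ i ∧ i ≤ b' ∧ π' ≤ q i := by
    intro i; rw [hEeq']; simp
  have hconv : ∀ x ∈ E, ∀ z ∈ E, ∀ y : Fin s, x ≤ y → y ≤ z → q (j E) ≤ q y → y ∈ E := by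
    intro x hx z hz y hxy hyz hqy
    rw [hmemE] at hx hz ⊢
    have hπ : π ≤ q (j E) := ((hmemE (j E)).mp hjmem).2.2
    exact ⟨le_trans hx.1 hxy, le_trans hyz hz.2.1, le_trans hπ (le_trans (le_refl _) hqy)⟩
  have hconv' : ∀ x ∈ E', ∀ z ∈ E', ∀ y : Fin s, x ≤ y → y ≤ z → q (j E') ≤ q y → y ∈ E' := by
    intro x hx z hz y hxy hyz hqy
    rw [hmemE'] at hx hz ⊢
    have hπ : π' ≤ q (j E') := ((hmemE' (j E')).mp hjmem').2.2
    exact ⟨le_trans hx.1 hxy, le_trans hyz hz.2.1, le_trans hπ hqy⟩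
  -- set j₀ := j E = j E'
  set j₀ : Fin s := j E with hj₀
  have hj0' : j E' = j₀ := hj0.symm
  -- lower parts are equal
  have hLo : E.filter (fun i => i < j₀) = E'.filter (fun i => i < j₀) := by
    apply upclosed_eq_aux (T := Finset.univ.filter fun y => q j₀ ≤ q y ∧ y < j₀)
    · intro x hx
      rw [Finset.mem_filter] at hx ⊢
      exact ⟨Finset.mem_univ _, hjmin x hx.1, hx.2⟩
    · intro x hx
      rw [Finset.mem_filter] at hx ⊢
      refine ⟨Finset.mem_univ _, ?_, hx.2⟩
      rw [← hj0']; exact hjmin' x hx.1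
    · intro x hx y hy hxy
      rw [Finset.mem_filter] at hx hy ⊢
      exact ⟨hconv x hx.1 (j₀) hjmem y hxy hy.2.2.le hy.2.1, hy.2.2⟩
    · intro x hx y hy hxy
      rw [Finset.mem_filter] at hx hy ⊢
      refine ⟨hconv' x hx.1 (j₀) (by rw [← hj0']; exact hjmem') y hxy hy.2.2.le ?_, hy.2.2⟩
      rw [hj0']; exact hy.2.1
    · rw [← hj0'] at hl ⊢
      exact hl
  -- upper parts are equal
  have hHi : E.filter (fun i => j₀ < i) = E'.filter (fun i => j₀ < i) := by
    apply downclosed_eq_aux (T := Finset.univ.filter fun y => q j₀ ≤ q y ∧ j₀ < y)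
    · intro x hx
      rw [Finset.mem_filter] at hx ⊢
      exact ⟨Finset.mem_univ _, hjmin x hx.1, hx.2⟩
    · intro x hx
      rw [Finset.mem_filter] at hx ⊢
      refine ⟨Finset.mem_univ _, ?_, hx.2⟩
      rw [← hj0']; exact hjmin' x hx.1
    · intro x hx y hy hyx
      rw [Finset.mem_filter] at hx hy ⊢
      exact ⟨hconv (j₀) hjmem x hx.1 y hy.2.2.le hyx hy.2.1, hy.2.2⟩
    · intro x hx y hy hyx
      rw [Finset.mem_filter] at hx hy ⊢
      refine ⟨hconv' (j₀) (by rw [← hj0']; exact hjmem') x hx.1 y hy.2.2.le hyx ?_, hy.2.2⟩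
      rw [hj0']; exact hy.2.1
    · rw [← hj0'] at hr ⊢
      exact hr
  -- conclude E = E'
  ext i
  rcases lt_trichotomy i j₀ with hi | hi | hi
  · constructor
    · intro hiE
      have : i ∈ E.filter (fun i => i < j₀) := Finset.mem_filter.mpr ⟨hiE, hi⟩
      rw [hLo] at this
      exact (Finset.mem_filter.mp this).1
    · intro hiE'
      have : i ∈ E'.filter (fun i => i < j₀) := Finset.mem_filter.mpr ⟨hiE', hi⟩
      rw [← hLo] at this
      exact (Finset.mem_filter.mp this).1
  · subst hi
    constructor
    · intro _; rw [← hj0']; exact hjmem'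
    · intro _; exact hjmem
  · constructor
    · intro hiE
      have : i ∈ E.filter (fun i => j₀ < i) := Finset.mem_filter.mpr ⟨hiE, hi⟩
      rw [hHi] at this
      exact (Finset.mem_filter.mp this).1
    · intro hiE'
      have : i ∈ E'.filter (fun i => j₀ < i) := Finset.mem_filter.mpr ⟨hiE', hi⟩
      rw [← hHi] at this
      exact (Finset.mem_filter.mp this).1
end

section
/- Let T be a binary tree and fix integers τ_min ≤ τ_max. Suppose B^opt(S,τ) > 0 is given for every cell (S,τ). Then there exist values B*(S,τ) > 0 for all cells such that: (i) each B*(S,τ) is an integer power of 2 (i.e., of the form 2^m with m ∈ ℤ) and B*(S,τ) ≥ B^opt(S,τ); (ii) Σ_{(S,τ)} B*(S,τ) ≤ 16·Σ_{(S,τ)} B^opt(S,τ); and (iii) (smoothness) for every edge S with parent edge S' and every τ: B*(S,τ) ≤ 8·B*(S',τ) and B*(S',τ) ≤ 8·B*(S,τ), and for every edge S and every τ with τ_min ≤ τ < τ_max: B*(S,τ) ≤ 8·B*(S,τ+1) and B*(S,τ+1) ≤ 8·B*(S,τ). -/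
/-!
Smooth `B^opt` by a kernel that decays geometrically in the distance between cells: set
`W x = ∑_y B^opt(y) · 4^{-δ(x,y)}`, where `δ` adds the tree distance between the edges and the
gap between the density classes. Then `W ≥ B^opt`, and since `δ` is `1`-Lipschitz in each move to
a parent edge or to a neighbouring class, `W` changes by a factor of at most `4` along such a move.
In a binary tree at most `2^n` vertices are reached from a fixed vertex by going up `m` steps and
then down `n` steps, so `∑_x 4^{-δ(x,y)} ≤ (8/3) · (8/3)` for every cell `y`, and
`∑ W ≤ (64/9) ∑ B^opt`. Rounding `W` up to the next power of `2` costs another factor `2`,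
which gives the factors `128/9 ≤ 16` and `8`.
-/

open Finset Function

theorem sum_comp_le_tsum_of_card_fiber_le {ι κ : Type*} [DecidableEq κ] (s : Finset ι)
    (f : ι → κ) {g c : κ → ℝ} (hg : ∀ k, 0 ≤ g k) (hc : ∀ k, (#{x ∈ s | f x = k} : ℝ) ≤ c k)
    (hcg : Summable fun k => c k * g k) :
    ∑ x ∈ s, g (f x) ≤ ∑' k, c k * g k := by
  rw [sum_comp]
  calc ∑ k ∈ s.image f, #{x ∈ s | f x = k} • g k ≤ ∑ k ∈ s.image f, c k * g k :=
        sum_le_sum fun k _ => by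
          rw [nsmul_eq_mul]; exact mul_le_mul_of_nonneg_right (hc k) (hg k)
    _ ≤ ∑' k, c k * g k :=
        hcg.sum_le_tsum _ fun k _ => mul_nonneg ((Nat.cast_nonneg _).trans (hc k)) (hg k)

theorem sum_pow_natAbs_sub_le {r : ℝ} (hr0 : 0 ≤ r) (hr1 : r < 1) (s : Finset ℤ) (t : ℤ) :
    ∑ τ ∈ s, r ^ (τ - t).natAbs ≤ 2 * (1 - r)⁻¹ := by
  have hfiber (k : ℕ) : (#{τ ∈ s | (τ - t).natAbs = k} : ℝ) ≤ 2 := by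
    have hsub : {τ ∈ s | (τ - t).natAbs = k} ⊆ {t + k, t - k} := fun τ hτ => by
      simp only [mem_filter, mem_insert, mem_singleton] at hτ ⊢; omega
    exact_mod_cast (card_le_card hsub).trans card_le_two
  calc ∑ τ ∈ s, r ^ (τ - t).natAbs ≤ ∑' k : ℕ, 2 * r ^ k :=
        sum_comp_le_tsum_of_card_fiber_le s _ (fun k => pow_nonneg hr0 k) hfiber
          ((summable_geometric_of_lt_one hr0 hr1).mul_left 2)
    _ = 2 * (1 - r)⁻¹ := by rw [tsum_mul_left, tsum_geometric_of_lt_one hr0 hr1]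

section RootedTree

variable {V : Type*} (root : V) (parent : V → V)

theorem iterate_depth_eq_root {depth : V → ℕ} (hroot : parent root = root)
    (hdepth : ∀ v, v ≠ root → depth v = depth (parent v) + 1) (v : V) :
    parent^[depth v] v = root := by
  suffices ∀ n v, depth v = n → parent^[n] v = root from this _ v rfl
  intro n
  induction n with
  | zero =>
    intro v hv
    by_contra hne
    have := hdepth v hne
    omega
  | succ n ih =>
    intro v hv
    by_cases hv_root : v = root
    · subst hv_root; exact iterate_fixed hroot _
    · rw [iterate_succ_apply]
      exact ih _ (by have := hdepth v hv_root; omega)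

/-- Junk value `0` when `a` and `b` have no common ancestor. -/
noncomputable def treeDist (a b : V) : ℕ :=
  sInf {k | ∃ n m, n + m = k ∧ parent^[n] a = parent^[m] b}

theorem treeDist_le {a b : V} {n m : ℕ} (h : parent^[n] a = parent^[m] b) :
    treeDist parent a b ≤ n + m :=
  Nat.sInf_le ⟨n, m, rfl, h⟩

theorem treeDist_self (a : V) : treeDist parent a a = 0 :=
  Nat.le_zero.mp (treeDist_le parent (n := 0) (m := 0) rfl)

variable {root parent}

theorem exists_iterate_eq_treeDist (hreach : ∀ v, ∃ n, parent^[n] v = root) (a b : V) :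
    ∃ n m, n + m = treeDist parent a b ∧ parent^[n] a = parent^[m] b := by
  obtain ⟨n, hn⟩ := hreach a
  obtain ⟨m, hm⟩ := hreach b
  exact Nat.sInf_mem (s := {k | ∃ n m, n + m = k ∧ parent^[n] a = parent^[m] b})
    ⟨n + m, n, m, rfl, hn.trans hm.symm⟩

theorem treeDist_le_treeDist_parent_add_one (hreach : ∀ v, ∃ n, parent^[n] v = root)
    (a b : V) : treeDist parent a b ≤ treeDist parent (parent a) b + 1 := by
  obtain ⟨n, m, hnm, h⟩ := exists_iterate_eq_treeDist hreach (parent a) b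
  have := treeDist_le parent (n := n + 1) (m := m) (by rwa [iterate_succ_apply])
  omega

theorem treeDist_parent_le (hreach : ∀ v, ∃ n, parent^[n] v = root) (a b : V) :
    treeDist parent (parent a) b ≤ treeDist parent a b + 1 := by
  obtain ⟨n, m, hnm, h⟩ := exists_iterate_eq_treeDist hreach a b
  cases n with
  | zero =>
    have := treeDist_le parent (n := 0) (m := m + 1)
      (show parent a = parent^[m + 1] b by rw [iterate_succ_apply', ← h]; rfl)
    omega
  | succ n =>
    have := treeDist_le parent (n := n) (m := m) (by rwa [iterate_succ_apply] at h)
    omega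

variable (root parent) [Fintype V] [DecidableEq V]

/-- The vertices `u` with `parent^[n] u = L` along a path of `n` genuine edges: the path does not
pass through the root, whose parent is itself. -/
def descendants (n : ℕ) (L : V) : Finset V :=
  {u | parent^[n] u = L ∧ ∀ i < n, parent^[i] u ≠ root}

variable {root parent}

theorem mem_descendants {n : ℕ} {L u : V} :
    u ∈ descendants root parent n L ↔ parent^[n] u = L ∧ ∀ i < n, parent^[i] u ≠ root := by
  simp [descendants]

theorem card_descendants_le (hbinary : ∀ v, #{u | u ≠ root ∧ parent u = v} ≤ 2) (n : ℕ) (L : V) :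
    #(descendants root parent n L) ≤ 2 ^ n := by
  induction n with
  | zero =>
    refine card_le_one.mpr fun u hu v hv => ?_
    rw [mem_descendants, iterate_zero_apply] at hu hv
    rw [hu.1, hv.1]
  | succ n ih =>
    have hsub : descendants root parent (n + 1) L ⊆
        (descendants root parent n L).biUnion fun p => {u | u ≠ root ∧ parent u = p} := by
      intro u hu
      simp only [mem_descendants, mem_biUnion, mem_filter, mem_univ, true_and] at hu ⊢
      obtain ⟨hL, hpath⟩ := hu
      refine ⟨parent u, ⟨by rwa [← iterate_succ_apply], fun i hi => ?_⟩, hpath 0 (by omega), rfl⟩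
      rw [← iterate_succ_apply]
      exact hpath (i + 1) (by omega)
    calc #(descendants root parent (n + 1) L)
        ≤ #(descendants root parent n L) * 2 :=
          (card_le_card hsub).trans (card_biUnion_le_card_mul _ _ _ fun p _ => hbinary p)
      _ ≤ 2 ^ (n + 1) := by rw [pow_succ]; exact Nat.mul_le_mul_right _ ih

theorem exists_mem_descendants (hroot : parent root = root)
    (hreach : ∀ v, ∃ n, parent^[n] v = root) (a b : V) :
    ∃ n m, n + m = treeDist parent a b ∧ a ∈ descendants root parent n (parent^[m] b) := by
  obtain ⟨n, m, hnm, h⟩ := exists_iterate_eq_treeDist hreach a b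
  refine ⟨n, m, hnm, mem_descendants.mpr ⟨h, fun i hi hia => ?_⟩⟩
  have hb : parent^[m] b = root := by
    rw [← h, ← Nat.sub_add_cancel hi.le, iterate_add_apply, hia, iterate_fixed hroot]
  have := treeDist_le parent (hia.trans hb.symm)
  omega

theorem sum_pow_treeDist_le (hroot : parent root = root) (hreach : ∀ v, ∃ n, parent^[n] v = root)
    (hbinary : ∀ v, #{u | u ≠ root ∧ parent u = v} ≤ 2) {r : ℝ} (hr0 : 0 ≤ r) (hr : 2 * r < 1)
    (s : Finset V) (b : V) :
    ∑ a ∈ s, r ^ treeDist parent a b ≤ (1 - 2 * r)⁻¹ * (1 - r)⁻¹ := by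
  choose n m hnm hmem using fun a => exists_mem_descendants hroot hreach a b
  have hfiber (p : ℕ × ℕ) : (#{a ∈ s | (n a, m a) = p} : ℝ) ≤ 2 ^ p.1 := by
    have hsub : {a ∈ s | (n a, m a) = p} ⊆ descendants root parent p.1 (parent^[p.2] b) := by
      intro a ha
      obtain ⟨-, rfl⟩ := mem_filter.mp ha
      exact hmem a
    exact_mod_cast (card_le_card hsub).trans (card_descendants_le hbinary _ _)
  have h2r : 0 ≤ 2 * r := by positivity
  have hr1 : r < 1 := by linarith
  have hsum2r : Summable fun k : ℕ => ‖(2 * r) ^ k‖ := by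
    simpa [abs_of_nonneg h2r] using summable_geometric_of_lt_one h2r hr
  have hsumr : Summable fun k : ℕ => ‖r ^ k‖ := by
    simpa [abs_of_nonneg hr0] using summable_geometric_of_lt_one hr0 hr1
  have hpow (p : ℕ × ℕ) : (2 : ℝ) ^ p.1 * r ^ (p.1 + p.2) = (2 * r) ^ p.1 * r ^ p.2 := by ring
  calc ∑ a ∈ s, r ^ treeDist parent a b
        = ∑ a ∈ s, (fun p : ℕ × ℕ => r ^ (p.1 + p.2)) (n a, m a) := by simp only [hnm]
    _ ≤ ∑' p : ℕ × ℕ, 2 ^ p.1 * r ^ (p.1 + p.2) := by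
        refine sum_comp_le_tsum_of_card_fiber_le s (fun a => (n a, m a))
          (g := fun p => r ^ (p.1 + p.2)) (fun p => pow_nonneg hr0 _) hfiber ?_
        simp only [hpow]
        exact (summable_geometric_of_lt_one h2r hr).mul_of_nonneg
          (summable_geometric_of_lt_one hr0 hr1) (fun _ => by positivity) fun _ => by positivity
    _ = (1 - 2 * r)⁻¹ * (1 - r)⁻¹ := by
        simp only [hpow]
        rw [← tsum_mul_tsum_of_summable_norm hsum2r hsumr, tsum_geometric_of_lt_one h2r hr,
          tsum_geometric_of_lt_one hr0 hr1]

end RootedTree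

noncomputable def twoPowAbove (x : ℝ) : ℝ :=
  2 ^ (Int.log 2 x + 1)

theorem lt_twoPowAbove (x : ℝ) : x < twoPowAbove x := by
  exact_mod_cast Int.lt_zpow_succ_log_self one_lt_two x

theorem twoPowAbove_le {x : ℝ} (hx : 0 < x) : twoPowAbove x ≤ 2 * x := by
  have h := Int.zpow_log_le_self one_lt_two hx
  push_cast at h
  rw [twoPowAbove, zpow_add_one₀ two_ne_zero]
  linarith

theorem twoPowAbove_le_eight_mul {x y : ℝ} (hx : 0 < x) (h : x ≤ 4 * y) :
    twoPowAbove x ≤ 8 * twoPowAbove y := by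
  linarith [twoPowAbove_le hx, lt_twoPowAbove y]

section Smoothing

variable {α : Type*} (C : Finset α) (δ : α → α → ℕ) (r : ℝ) (B : α → ℝ)

def smoothing (x : α) : ℝ :=
  ∑ y ∈ C, B y * r ^ δ x y

variable {C δ r B}

theorem le_smoothing (hB : ∀ y ∈ C, 0 ≤ B y) (hr : 0 ≤ r) {x : α} (hx : x ∈ C)
    (hδ : δ x x = 0) : B x ≤ smoothing C δ r B x := by
  have := single_le_sum (f := fun y => B y * r ^ δ x y)
    (fun y hy => mul_nonneg (hB y hy) (pow_nonneg hr _)) hx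
  simpa [smoothing, hδ] using this

theorem mul_smoothing_le (hB : ∀ y ∈ C, 0 ≤ B y) (hr0 : 0 ≤ r) (hr1 : r ≤ 1) {x y : α}
    (hxy : ∀ z, δ x z ≤ δ y z + 1) : r * smoothing C δ r B y ≤ smoothing C δ r B x := by
  rw [smoothing, smoothing, mul_sum]
  refine sum_le_sum fun z hz => ?_
  calc r * (B z * r ^ δ y z) = B z * r ^ (δ y z + 1) := by ring
    _ ≤ B z * r ^ δ x z :=
        mul_le_mul_of_nonneg_left (pow_le_pow_of_le_one hr0 hr1 (hxy z)) (hB z hz)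

theorem sum_smoothing_le (hB : ∀ y ∈ C, 0 ≤ B y) {K : ℝ} (hK : ∀ z ∈ C, ∑ x ∈ C, r ^ δ x z ≤ K) :
    ∑ x ∈ C, smoothing C δ r B x ≤ K * ∑ y ∈ C, B y := by
  calc ∑ x ∈ C, smoothing C δ r B x = ∑ y ∈ C, B y * ∑ x ∈ C, r ^ δ x y := by
        simp only [smoothing, mul_sum]; exact sum_comm
    _ ≤ ∑ y ∈ C, B y * K := sum_le_sum fun y hy => mul_le_mul_of_nonneg_left (hK y hy) (hB y hy)
    _ = K * ∑ y ∈ C, B y := by rw [mul_sum]; simp only [mul_comm]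

theorem exists_pow_two_smoothing (hB : ∀ x ∈ C, 0 < B x) (hδ : ∀ x ∈ C, δ x x = 0) {K : ℝ}
    (hK : ∀ z ∈ C, ∑ x ∈ C, (1 / 4 : ℝ) ^ δ x z ≤ K) :
    ∃ B' : α → ℝ, (∀ x ∈ C, (∃ m : ℤ, B' x = 2 ^ m) ∧ B x ≤ B' x) ∧
      ∑ x ∈ C, B' x ≤ 2 * K * ∑ x ∈ C, B x ∧
      ∀ x, ∀ y ∈ C, (∀ z, δ x z ≤ δ y z + 1) → B' y ≤ 8 * B' x := by
  set W := smoothing C δ (1 / 4) B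
  have hB0 : ∀ y ∈ C, 0 ≤ B y := fun y hy => (hB y hy).le
  have hW (x : α) (hx : x ∈ C) : B x ≤ W x := le_smoothing hB0 (by norm_num) hx (hδ x hx)
  refine ⟨fun x => twoPowAbove (W x),
    fun x hx => ⟨⟨_, rfl⟩, (hW x hx).trans (lt_twoPowAbove _).le⟩, ?_, fun x y hy hxy => ?_⟩
  · calc ∑ x ∈ C, twoPowAbove (W x) ≤ ∑ x ∈ C, 2 * W x :=
          sum_le_sum fun x hx => twoPowAbove_le ((hB x hx).trans_le (hW x hx))
      _ = 2 * ∑ x ∈ C, W x := (mul_sum _ _ _).symm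
      _ ≤ 2 * (K * ∑ x ∈ C, B x) := by gcongr; exact sum_smoothing_le hB0 hK
      _ = 2 * K * ∑ x ∈ C, B x := by ring
  · have := mul_smoothing_le (r := 1 / 4) hB0 (by norm_num) (by norm_num) hxy
    exact twoPowAbove_le_eight_mul ((hB y hy).trans_le (hW y hy)) (by linarith)

end Smoothing

section Cells

variable {V : Type*} (parent : V → V)

noncomputable def cellDist (x y : V × ℤ) : ℕ :=
  treeDist parent x.1 y.1 + (x.2 - y.2).natAbs

variable {root : V} {parent}

theorem sum_pow_cellDist_le [Fintype V] [DecidableEq V] (hroot : parent root = root)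
    (hreach : ∀ v, ∃ n, parent^[n] v = root) (hbinary : ∀ v, #{u | u ≠ root ∧ parent u = v} ≤ 2)
    {r : ℝ} (hr0 : 0 ≤ r) (hr : 2 * r < 1) (E : Finset V) (I : Finset ℤ) (z : V × ℤ) :
    ∑ x ∈ E ×ˢ I, r ^ cellDist parent x z ≤ (1 - 2 * r)⁻¹ * (1 - r)⁻¹ * (2 * (1 - r)⁻¹) := by
  simp only [cellDist, pow_add, sum_product, ← sum_mul_sum]
  exact mul_le_mul (sum_pow_treeDist_le hroot hreach hbinary hr0 hr E z.1)
    (sum_pow_natAbs_sub_le hr0 (by linarith) I z.2) (sum_nonneg fun _ _ => by positivity)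
    (mul_nonneg (inv_nonneg.mpr (by linarith)) (inv_nonneg.mpr (by linarith)))

end Cells

theorem stmt13_general {V : Type} [Fintype V] [DecidableEq V]
    (root : V) (parent : V → V) (depth : V → ℕ)
    (hroot : parent root = root)
    (hdepth : ∀ v, v ≠ root → depth v = depth (parent v) + 1)
    (hbinary : ∀ v : V,
      (Finset.univ.filter fun u => u ≠ root ∧ parent u = v).card ≤ 2)
    (τmin τmax : ℤ)
    (Bopt : V → ℤ → ℝ)
    (hBopt : ∀ S, S ≠ root → ∀ τ ∈ Finset.Icc τmin τmax, 0 < Bopt S τ) :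
    ∃ Bstar : V → ℤ → ℝ,
      (∀ S, S ≠ root → ∀ τ ∈ Finset.Icc τmin τmax,
        (∃ m : ℤ, Bstar S τ = 2 ^ m) ∧ Bopt S τ ≤ Bstar S τ) ∧
      ((∑ S ∈ Finset.univ.filter fun v => v ≠ root,
          ∑ τ ∈ Finset.Icc τmin τmax, Bstar S τ)
        ≤ 16 * ∑ S ∈ Finset.univ.filter fun v => v ≠ root,
            ∑ τ ∈ Finset.Icc τmin τmax, Bopt S τ) ∧
      (∀ S, S ≠ root → parent S ≠ root → ∀ τ ∈ Finset.Icc τmin τmax,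
        Bstar S τ ≤ 8 * Bstar (parent S) τ ∧ Bstar (parent S) τ ≤ 8 * Bstar S τ) ∧
      (∀ S, S ≠ root → ∀ τ : ℤ, τmin ≤ τ → τ < τmax →
        Bstar S τ ≤ 8 * Bstar S (τ + 1) ∧ Bstar S (τ + 1) ≤ 8 * Bstar S τ) := by
  have hreach (v : V) : ∃ n, parent^[n] v = root :=
    ⟨depth v, iterate_depth_eq_root root parent hroot hdepth v⟩
  set C := (univ.filter fun v => v ≠ root) ×ˢ Icc τmin τmax
  have hmem {S : V} {τ : ℤ} (hS : S ≠ root) (hτ : τ ∈ Icc τmin τmax) : (S, τ) ∈ C :=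
    mem_product.mpr ⟨by simpa using hS, hτ⟩
  have hB (x : V × ℤ) (hx : x ∈ C) : 0 < Bopt x.1 x.2 := by
    obtain ⟨hS, hτ⟩ := mem_product.mp hx
    exact hBopt x.1 (mem_filter.mp hS).2 x.2 hτ
  obtain ⟨B', hB'_ge, hB'_sum, hB'_smooth⟩ := exists_pow_two_smoothing (δ := cellDist parent) hB
    (fun x _ => by simp [cellDist, treeDist_self])
    fun z _ => sum_pow_cellDist_le hroot hreach hbinary (r := 1 / 4) (by norm_num) (by norm_num)
      _ _ z
  refine ⟨fun S τ => B' (S, τ), fun S hS τ hτ => hB'_ge _ (hmem hS hτ), ?_, ?_, ?_⟩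
  · have hBopt_sum : 0 ≤ ∑ S ∈ univ.filter fun v => v ≠ root, ∑ τ ∈ Icc τmin τmax, Bopt S τ :=
      sum_nonneg fun S hS => sum_nonneg fun τ hτ => (hBopt S (mem_filter.mp hS).2 τ hτ).le
    rw [sum_product, sum_product] at hB'_sum
    exact hB'_sum.trans (mul_le_mul_of_nonneg_right (by norm_num) hBopt_sum)
  · intro S hS hPS τ hτ
    exact ⟨hB'_smooth _ _ (hmem hS hτ) fun z => by
        dsimp only [cellDist]; have := treeDist_parent_le hreach S z.1; omega,
      hB'_smooth _ _ (hmem hPS hτ) fun z => by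
        dsimp only [cellDist]; have := treeDist_le_treeDist_parent_add_one hreach S z.1; omega⟩
  · intro S hS τ hτmin hτmax
    have hτ : τ ∈ Icc τmin τmax := mem_Icc.mpr ⟨hτmin, hτmax.le⟩
    have hτ' : τ + 1 ∈ Icc τmin τmax := mem_Icc.mpr ⟨by omega, hτmax⟩
    exact ⟨hB'_smooth _ _ (hmem hS hτ) fun z => by dsimp only [cellDist]; omega,
      hB'_smooth _ _ (hmem hS hτ') fun z => by dsimp only [cellDist]; omega⟩

/-- smoothing the optimal budgets.  A finite rooted tree is encoded by a
root, a parent map (fixing the root) and a depth function certifying acyclicity; its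
edges are identified with the non-root vertices (the edge `S` joins `S` to
`parent S`), and the parent edge of an edge `S` is the edge `parent S` (which exists
when `parent S ≠ root`).  The tree is binary: every vertex has at most two children.
Cells are pairs `(S, τ)` with `S` an edge and `τ ∈ [τmin, τmax]`.  Given positive
values `Bopt` on cells, there exist values `Bstar` on cells such that:
(i) each `Bstar S τ` is an integer power of `2` and `Bstar S τ ≥ Bopt S τ`;
(ii) `∑ Bstar ≤ 16 · ∑ Bopt` over all cells; and
(iii) (smoothness) `Bstar` changes by a factor of at most `8` between a cell and the
corresponding cell of the parent edge, and between consecutive density classes. -/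
theorem stmt13 {V : Type} [Fintype V] [DecidableEq V]
    (root : V) (parent : V → V) (depth : V → ℕ)
    (hroot : parent root = root)
    (hdepth : ∀ v, v ≠ root → depth v = depth (parent v) + 1)
    (hbinary : ∀ v : V,
      (Finset.univ.filter fun u => u ≠ root ∧ parent u = v).card ≤ 2)
    (τmin τmax : ℤ) (hτ : τmin ≤ τmax)
    (Bopt : V → ℤ → ℝ)
    (hBopt : ∀ S, S ≠ root → ∀ τ ∈ Finset.Icc τmin τmax, 0 < Bopt S τ) :
    ∃ Bstar : V → ℤ → ℝ,
      (∀ S, S ≠ root → ∀ τ ∈ Finset.Icc τmin τmax,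
        (∃ m : ℤ, Bstar S τ = 2 ^ m) ∧ Bopt S τ ≤ Bstar S τ) ∧
      ((∑ S ∈ Finset.univ.filter fun v => v ≠ root,
          ∑ τ ∈ Finset.Icc τmin τmax, Bstar S τ)
        ≤ 16 * ∑ S ∈ Finset.univ.filter fun v => v ≠ root,
            ∑ τ ∈ Finset.Icc τmin τmax, Bopt S τ) ∧
      (∀ S, S ≠ root → parent S ≠ root → ∀ τ ∈ Finset.Icc τmin τmax,
        Bstar S τ ≤ 8 * Bstar (parent S) τ ∧ Bstar (parent S) τ ≤ 8 * Bstar S τ) ∧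
      (∀ S, S ≠ root → ∀ τ : ℤ, τmin ≤ τ → τ < τmax →
        Bstar S τ ≤ 8 * Bstar S (τ + 1) ∧ Bstar S (τ + 1) ≤ 8 * Bstar S τ) :=
  stmt13_general root parent depth hroot hdepth hbinary τmin τmax Bopt hBopt
end

section
/- Let c_1, …, c_m ≥ 0 be costs and B > 0 a budget. Let G ⊆ {1,…,m} be constructed greedily: process i = 1,…,m in order; skip i if c_i > B; otherwise add i to G provided the total cost of the items currently in G is at most 2B. Then for every subset X ⊆ {1,…,m} with Σ_{i∈X} c_i ≤ B and every t ∈ {1,…,m}: Σ_{i∈G, i≤t} c_i ≥ Σ_{i∈X, i≤t} c_i. -/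
/-!
If the greedy set built from the first `t` items has cost more than `2B`, it dominates every
budget-`B` set outright. Otherwise the greedy rule never refused an item up to `t`, so every
item `i ≤ t` of cost at most `B` — in particular every item of a budget-`B` set — was selected.
-/

open Classical in
/-- Items are numbered from `1`: `greedyPrefix c B t` is the greedy set after items `1, …, t`. -/
noncomputable def greedyPrefix (c : ℕ → ℝ) (B : ℝ) : ℕ → Finset ℕ
  | 0 => ∅
  | t + 1 =>
    if c (t + 1) ≤ B ∧ ∑ x ∈ greedyPrefix c B t, c x ≤ 2 * B then
      insert (t + 1) (greedyPrefix c B t)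
    else greedyPrefix c B t

namespace greedyPrefix

variable (c : ℕ → ℝ) (B : ℝ)

theorem subset_Icc (t : ℕ) : greedyPrefix c B t ⊆ Finset.Icc 1 t := by
  induction t with
  | zero => simp [greedyPrefix]
  | succ t ih =>
    have hle : Finset.Icc 1 t ⊆ Finset.Icc 1 (t + 1) := Finset.Icc_subset_Icc le_rfl t.le_succ
    rw [greedyPrefix]
    split
    · exact Finset.insert_subset (by simp) (ih.trans hle)
    · exact ih.trans hle

theorem monotone : Monotone (greedyPrefix c B) := by
  refine monotone_nat_of_le_succ fun t => ?_
  rw [greedyPrefix]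
  split
  · exact Finset.subset_insert _ _
  · exact le_rfl

theorem filter_le (t m : ℕ) :
    (greedyPrefix c B m).filter (· ≤ t) = greedyPrefix c B (min t m) := by
  induction m with
  | zero => simp [greedyPrefix]
  | succ m ih =>
    rcases le_or_gt (m + 1) t with hmt | htm
    · rw [min_eq_right hmt]
      exact Finset.filter_true_of_mem fun i hi =>
        (Finset.mem_Icc.1 (subset_Icc c B _ hi)).2.trans hmt
    · rw [min_eq_left (Nat.le_of_lt_succ htm)] at ih
      rw [min_eq_left htm.le, ← ih, greedyPrefix]
      split
      · rw [Finset.filter_insert, if_neg htm.not_ge]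
      · rfl

theorem mem_of_sum_le (hc : ∀ i, 0 ≤ c i) {t i : ℕ}
    (hsum : ∑ x ∈ greedyPrefix c B t, c x ≤ 2 * B) (hi : i ∈ Finset.Icc 1 t) (hci : c i ≤ B) :
    i ∈ greedyPrefix c B t := by
  obtain ⟨hi1, hit⟩ := Finset.mem_Icc.1 hi
  obtain ⟨j, rfl⟩ := Nat.exists_eq_add_one.2 hi1
  have hsum_j : ∑ x ∈ greedyPrefix c B j, c x ≤ 2 * B :=
    (Finset.sum_le_sum_of_subset_of_nonneg (monotone c B (Nat.le_of_succ_le hit))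
      fun x _ _ => hc x).trans hsum
  apply monotone c B hit
  rw [greedyPrefix, if_pos ⟨hci, hsum_j⟩]
  exact Finset.mem_insert_self _ _

end greedyPrefix

theorem stmt18_general (m : ℕ) (c : ℕ → ℝ) (hc : ∀ i, 0 ≤ c i) (B : ℝ)
    (X : Finset ℕ) (hX : X ⊆ Finset.Icc 1 m) (hXB : ∑ i ∈ X, c i ≤ B)
    (t : ℕ) :
    ∑ i ∈ X.filter (· ≤ t), c i
      ≤ ∑ i ∈ (greedyPrefix c B m).filter (· ≤ t), c i := by
  rw [greedyPrefix.filter_le]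
  have hXt : ∑ i ∈ X.filter (· ≤ t), c i ≤ ∑ i ∈ X, c i :=
    Finset.sum_le_sum_of_subset_of_nonneg (Finset.filter_subset _ _) fun i _ _ => hc i
  have hB : 0 ≤ B := (Finset.sum_nonneg fun i _ => hc i).trans hXB
  by_cases hsum : ∑ x ∈ greedyPrefix c B (min t m), c x ≤ 2 * B
  · refine Finset.sum_le_sum_of_subset_of_nonneg (fun i hi => ?_) fun i _ _ => hc i
    obtain ⟨hiX, hit⟩ := Finset.mem_filter.1 hi
    have him := Finset.mem_Icc.1 (hX hiX)
    exact greedyPrefix.mem_of_sum_le c B hc hsum (Finset.mem_Icc.2 ⟨him.1, le_min hit him.2⟩)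
      ((Finset.single_le_sum (fun j _ => hc j) hiX).trans hXB)
  · linarith

/-- prefix-domination of greedy selection.  For every subset
`X ⊆ {1,…,m}` of total cost at most `B` and every `t ∈ {1,…,m}`, the greedy set `G`
(obtained by processing `1,…,m` in order, skipping items of cost more than `B`, and
adding an item whenever the current total is at most `2B`) satisfies
`∑_{i ∈ G, i ≤ t} c i ≥ ∑_{i ∈ X, i ≤ t} c i`. -/
theorem stmt18 (m : ℕ) (c : ℕ → ℝ) (hc : ∀ i, 0 ≤ c i) (B : ℝ) (hB : 0 < B)
    (X : Finset ℕ) (hX : X ⊆ Finset.Icc 1 m) (hXB : ∑ i ∈ X, c i ≤ B)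
    (t : ℕ) (ht1 : 1 ≤ t) (htm : t ≤ m) :
    ∑ i ∈ X.filter (· ≤ t), c i
      ≤ ∑ i ∈ (greedyPrefix c B m).filter (· ≤ t), c i :=
  stmt18_general m c hc B X hX hXB t
end

section
/- Let items 1, …, m have costs c_i > 0 and sizes p_i > 0, and let B > 0 be a budget. Let E_B = {i : c_i ≤ B}, and let G ⊆ E_B be obtained by processing the items of E_B in some order of non-decreasing density c_i/p_i, adding each item provided the total cost of the items currently in G is at most B. Then Σ_{i∈G} c_i ≤ 2B, and for every subset X ⊆ {1,…,m} with Σ_{i∈X} c_i ≤ B we have Σ_{i∈G} p_i ≥ Σ_{i∈X} p_i. -/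
/-! Greedy stops adding items as soon as its cost exceeds `B`, and each item costs at most `B`,
so the final cost is at most `2B`. If a feasible `X` is not already contained in the greedy set
`R`, greedy stopped early, so `X \ R` costs less than `R \ X`; every item of `X \ R` comes after
every item of `R` in the density order, hence with a density threshold `δ` separating them,
`δ · p(X \ R) ≤ c(X \ R) ≤ c(R \ X) ≤ δ · p(R \ X)`. -/

open Classical in
/-- Process a list of items in order, adding each item to the current selection
provided the total cost of the items currently selected is at most `B`. -/
noncomputable def greedyDensity (c : ℕ → ℝ) (B : ℝ) : List ℕ → Finset ℕ → Finset ℕ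
  | [], G => G
  | i :: rest, G =>
    if ∑ x ∈ G, c x ≤ B then greedyDensity c B rest (insert i G)
    else greedyDensity c B rest G

open Finset

theorem sum_le_sum_of_density_le {ι : Type*} {S T : Finset ι} {c p : ι → ℝ}
    (hc : ∀ i ∈ S, 0 < c i) (hpS : ∀ i ∈ S, 0 < p i) (hpT : ∀ j ∈ T, 0 < p j)
    (hdens : ∀ i ∈ S, ∀ j ∈ T, c j / p j ≤ c i / p i)
    (hcost : ∑ i ∈ S, c i ≤ ∑ j ∈ T, c j) :
    ∑ i ∈ S, p i ≤ ∑ j ∈ T, p j := by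
  rcases S.eq_empty_or_nonempty with rfl | hS
  · simpa using sum_nonneg fun j hj => (hpT j hj).le
  obtain ⟨a, ha, hmin⟩ := S.exists_min_image (fun i => c i / p i) hS
  set δ := c a / p a
  have hδ : 0 < δ := div_pos (hc a ha) (hpS a ha)
  have hS_le : ∀ i ∈ S, δ * p i ≤ c i := fun i hi =>
    (le_div_iff₀ (hpS i hi)).1 (hmin i hi)
  have hT_le : ∀ j ∈ T, c j ≤ δ * p j := fun j hj =>
    (div_le_iff₀ (hpT j hj)).1 (hdens a ha j hj)
  refine le_of_mul_le_mul_left ?_ hδ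
  calc δ * ∑ i ∈ S, p i = ∑ i ∈ S, δ * p i := mul_sum _ _ _
    _ ≤ ∑ i ∈ S, c i := sum_le_sum hS_le
    _ ≤ ∑ j ∈ T, c j := hcost
    _ ≤ ∑ j ∈ T, δ * p j := sum_le_sum hT_le
    _ = δ * ∑ j ∈ T, p j := (mul_sum _ _ _).symm

section greedyDensity

variable (c : ℕ → ℝ) (B : ℝ)

theorem greedyDensity_of_lt (L : List ℕ) {G : Finset ℕ} (h : B < ∑ x ∈ G, c x) :
    greedyDensity c B L G = G := by
  induction L with
  | nil => rfl
  | cons i rest ih => rw [greedyDensity, if_neg h.not_ge, ih]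

theorem exists_append_greedyDensity_eq_union (L : List ℕ) (G : Finset ℕ) :
    ∃ L₁ L₂ : List ℕ, L = L₁ ++ L₂ ∧
      greedyDensity c B L G = G ∪ L₁.toFinset ∧
      (L₂ ≠ [] → B < ∑ x ∈ greedyDensity c B L G, c x) := by
  induction L generalizing G with
  | nil => exact ⟨[], [], rfl, by simp [greedyDensity], by simp⟩
  | cons i rest ih =>
    by_cases h : ∑ x ∈ G, c x ≤ B
    · obtain ⟨L₁, L₂, rfl, hG, hstop⟩ := ih (insert i G)
      refine ⟨i :: L₁, L₂, rfl, ?_, ?_⟩ <;> rw [greedyDensity, if_pos h]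
      · rw [hG, List.toFinset_cons, insert_union, union_insert]
      · exact hstop
    · rw [not_le] at h
      refine ⟨[], i :: rest, rfl, ?_, fun _ => ?_⟩ <;>
        rw [greedyDensity, if_neg h.not_ge, greedyDensity_of_lt c B rest h]
      · simp
      · exact h

theorem sum_greedyDensity_le_two_mul {L : List ℕ} {G : Finset ℕ}
    (hG : ∑ x ∈ G, c x ≤ 2 * B) (hL : ∀ i ∈ L, c i ≤ B) :
    ∑ x ∈ greedyDensity c B L G, c x ≤ 2 * B := by
  induction L generalizing G with
  | nil => exact hG
  | cons i rest ih =>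
    have hrest : ∀ j ∈ rest, c j ≤ B := fun j hj => hL j (List.mem_cons_of_mem _ hj)
    by_cases h : ∑ x ∈ G, c x ≤ B
    · rw [greedyDensity, if_pos h]
      refine ih ?_ hrest
      by_cases hiG : i ∈ G
      · rwa [insert_eq_of_mem hiG]
      · rw [sum_insert hiG]; linarith [hL i List.mem_cons_self]
    · rw [greedyDensity, if_neg h]
      exact ih hG hrest

variable {c B}

theorem sum_le_sum_greedyDensity {p : ℕ → ℝ} {L : List ℕ}
    (hsorted : L.Pairwise fun a b => c a / p a ≤ c b / p b)
    (hpos : ∀ i ∈ L, 0 < c i ∧ 0 < p i) {X : Finset ℕ} (hXL : ∀ i ∈ X, i ∈ L)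
    (hX : ∑ i ∈ X, c i ≤ B) :
    ∑ i ∈ X, p i ≤ ∑ i ∈ greedyDensity c B L ∅, p i := by
  obtain ⟨L₁, L₂, rfl, hR, hstop⟩ := exists_append_greedyDensity_eq_union c B L ∅
  rw [empty_union] at hR
  rw [hR] at hstop ⊢
  have hposR : ∀ j ∈ L₁.toFinset, 0 < c j ∧ 0 < p j := fun j hj =>
    hpos j (List.mem_append_left _ (List.mem_toFinset.1 hj))
  by_cases hXR : X ⊆ L₁.toFinset
  · exact sum_le_sum_of_subset_of_nonneg hXR fun j hj _ => (hposR j hj).2.le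
  have hlate : ∀ i ∈ X \ L₁.toFinset, i ∈ L₂ := fun i hi => by
    obtain ⟨hiX, hiR⟩ := mem_sdiff.1 hi
    exact (List.mem_append.1 (hXL i hiX)).resolve_left (mt List.mem_toFinset.2 hiR)
  obtain ⟨i, hiX, hiR⟩ := not_subset.1 hXR
  have hBR := hstop (List.ne_nil_of_mem (hlate i (mem_sdiff.2 ⟨hiX, hiR⟩)))
  have hposX : ∀ i ∈ X \ L₁.toFinset, 0 < c i ∧ 0 < p i := fun i hi =>
    hpos i (hXL i (mem_sdiff.1 hi).1)
  rw [← sum_sdiff_le_sum_sdiff]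
  refine sum_le_sum_of_density_le (fun i hi => (hposX i hi).1) (fun i hi => (hposX i hi).2)
    (fun j hj => (hposR j (mem_sdiff.1 hj).1).2) (fun i hi j hj => ?_)
    (sum_sdiff_le_sum_sdiff.2 (by linarith))
  exact (List.pairwise_append.1 hsorted).2.2 j (List.mem_toFinset.1 (mem_sdiff.1 hj).1) i
    (hlate i hi)

end greedyDensity

theorem stmt19_general (m : ℕ) (c p : ℕ → ℝ)
    (hc : ∀ i ∈ Finset.Icc 1 m, 0 < c i) (hp : ∀ i ∈ Finset.Icc 1 m, 0 < p i)
    (B : ℝ) (hB : 0 < B)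
    (L : List ℕ)
    (hmem : ∀ i, i ∈ L ↔ (i ∈ Finset.Icc 1 m ∧ c i ≤ B))
    (hsorted : L.Pairwise fun a b => c a / p a ≤ c b / p b) :
    ∑ i ∈ greedyDensity c B L ∅, c i ≤ 2 * B ∧
    ∀ X : Finset ℕ, X ⊆ Finset.Icc 1 m → ∑ i ∈ X, c i ≤ B →
      ∑ i ∈ X, p i ≤ ∑ i ∈ greedyDensity c B L ∅, p i := by
  have hpos : ∀ i ∈ L, 0 < c i ∧ 0 < p i := fun i hi =>
    have hi := ((hmem i).1 hi).1
    ⟨hc i hi, hp i hi⟩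
  refine ⟨sum_greedyDensity_le_two_mul c B (by simpa using hB.le) fun i hi => ((hmem i).1 hi).2,
    fun X hX hXB => sum_le_sum_greedyDensity hsorted hpos (fun i hi => ?_) hXB⟩
  exact (hmem i).2 ⟨hX hi, (single_le_sum (fun j hj => (hc j (hX hj)).le) hi).trans hXB⟩

/-- greedy knapsack-cover guarantee.  Items `1, …, m` have positive
costs `c i` and sizes `p i`; `L` lists the items of `E_B = {i : c i ≤ B}` in some
order of non-decreasing density `c i / p i`, and `G` is obtained by processing `L`
in order, adding each item provided the current total cost is at most `B`.  Then
`∑_{i ∈ G} c i ≤ 2B`, and for every `X ⊆ {1,…,m}` with `∑_{i ∈ X} c i ≤ B` we have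
`∑_{i ∈ G} p i ≥ ∑_{i ∈ X} p i`. -/
theorem stmt19 (m : ℕ) (c p : ℕ → ℝ)
    (hc : ∀ i ∈ Finset.Icc 1 m, 0 < c i) (hp : ∀ i ∈ Finset.Icc 1 m, 0 < p i)
    (B : ℝ) (hB : 0 < B)
    (L : List ℕ) (hnd : L.Nodup)
    (hmem : ∀ i, i ∈ L ↔ (i ∈ Finset.Icc 1 m ∧ c i ≤ B))
    (hsorted : L.Pairwise fun a b => c a / p a ≤ c b / p b) :
    ∑ i ∈ greedyDensity c B L ∅, c i ≤ 2 * B ∧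
    ∀ X : Finset ℕ, X ⊆ Finset.Icc 1 m → ∑ i ∈ X, c i ≤ B →
      ∑ i ∈ X, p i ≤ ∑ i ∈ greedyDensity c B L ∅, p i :=
  stmt19_general m c p hc hp B hB L hmem hsorted
end
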